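/- arXiv:2309.00546 — 2 statements merged into one kernel-verified Lean document; each statement's English description precedes it below -/
import Mathlib

section
/- Let n ≡ 0 (mod 4) and let P be a bichromatic convex point set with n red and n blue points whose coloring is a 4-block coloring with blocks of sizes n/2+1, n/2, n/2−1, n/2 in cyclic order R1, B1, R2, B2. Then the maximum of cr(M) over all straight-line bichromatic perfect matchings M on P equals 3n²/8 − n/2, the same value as for the balanced 4-block coloring. -/
open Finset

/-- Two closed-segment edges cross: their open segments (relative interiors) intersect. -/
def SegCross (a b c d : ℝ × ℝ) : Prop :=
  ∃ x : ℝ × ℝ, x ∈ openSegment ℝ a b ∧ x ∈ openSegment ℝ c d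

/-- `f` is a straight-line bichromatic perfect matching on points indexed by `Fin m`
with coloring `c` (`true` = red, `false` = blue): it is a fixed-point-free involution
matching points of different colors. -/
def IsBPM (m : ℕ) (c : Fin m → Bool) (f : Fin m → Fin m) : Prop :=
  Function.Involutive f ∧ (∀ i, f i ≠ i) ∧ (∀ i, c (f i) ≠ c i)

/-- Number of crossing pairs of edges of the matching `f` on the points `p`:
each edge is represented by its smaller endpoint. -/
noncomputable def crNum (m : ℕ) (p : Fin m → ℝ × ℝ) (f : Fin m → Fin m) : ℕ :=
  Nat.card {q : Fin m × Fin m // q.1 < q.2 ∧ q.1 < f q.1 ∧ q.2 < f q.2 ∧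
    SegCross (p q.1) (p (f q.1)) (p q.2) (p (f q.2))}

/-- The points `p 0, p 1, …` are distinct and in strictly convex position,
listed in clockwise order (every triple is negatively oriented). -/
def ConvexCW (m : ℕ) (p : Fin m → ℝ × ℝ) : Prop :=
  Function.Injective p ∧
  ∀ i j k : Fin m, (i : ℕ) < (j : ℕ) → (j : ℕ) < (k : ℕ) →
    ((p j).1 - (p i).1) * ((p k).2 - (p i).2) -
      ((p j).2 - (p i).2) * ((p k).1 - (p i).1) < 0

/-- The points are distinct and in general position: no three collinear. -/
def GenPos (m : ℕ) (p : Fin m → ℝ × ℝ) : Prop :=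
  Function.Injective p ∧
  ∀ i j k : Fin m, i ≠ j → i ≠ k → j ≠ k →
    ¬ Collinear ℝ ({p i, p j, p k} : Set (ℝ × ℝ))

/-- The coloring has exactly `n` red points (hence `n` blue points among the `2n`). -/
def Bichrom (n : ℕ) (c : Fin (2 * n) → Bool) : Prop :=
  (Finset.univ.filter fun i : Fin (2 * n) => c i = true).card = n

/-- The coloring alternates along the (cyclic) convex hull order. -/
def Alternating (m : ℕ) (c : Fin m → Bool) : Prop :=
  ∀ i j : Fin m, (j : ℕ) = ((i : ℕ) + 1) % m → c j ≠ c i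

/-- The coloring is a 4-block coloring: starting at position `t` along the cyclic order,
there come `r1` red points, then `b1` blue, then `r2` red, then `b2` blue,
all four blocks nonempty. -/
def FourBlockAt (n : ℕ) (c : Fin (2 * n) → Bool) (t : Fin (2 * n))
    (r1 b1 r2 b2 : ℕ) : Prop :=
  0 < r1 ∧ 0 < b1 ∧ 0 < r2 ∧ 0 < b2 ∧
  r1 + b1 + r2 + b2 = 2 * n ∧ r1 + r2 = n ∧
  ∀ j : Fin (2 * n), c (t + j) =
    if (j : ℕ) < r1 then true
    else if (j : ℕ) < r1 + b1 then false
    else if (j : ℕ) < r1 + b1 + r2 then true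
    else false

/-- The coloring is a 4-block coloring (for some start and block sizes). -/
def FourBlock (n : ℕ) (c : Fin (2 * n) → Bool) : Prop :=
  ∃ t r1 b1 r2 b2, FourBlockAt n c t r1 b1 r2 b2

/-- The coloring is a balanced 4-block coloring: any two block sizes differ by at most 1. -/
def Balanced4 (n : ℕ) (c : Fin (2 * n) → Bool) : Prop :=
  ∃ t r1 b1 r2 b2, FourBlockAt n c t r1 b1 r2 b2 ∧
    ∀ x ∈ [r1, b1, r2, b2], ∀ y ∈ [r1, b1, r2, b2], x ≤ y + 1

/-- The value `3n²/8 − n/2 + c` with `c` depending on `n mod 4`. -/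
def maxCrBound (n : ℕ) : ℚ :=
  3 * (n : ℚ) ^ 2 / 8 - (n : ℚ) / 2 +
    (if n % 4 = 0 then 0 else if n % 4 = 2 then -(1 / 2 : ℚ) else 1 / 8)

/-- `i` and `j` lie in the same monochromatic block: there is a cyclic arc from `i` to
`j` consisting of points of the color of `i`. -/
def SameBlockArc (m : ℕ) (c : Fin m → Bool) (i j : Fin m) : Prop :=
  ∃ d : Fin m, j = i + d ∧ ∀ e : Fin m, e ≤ d → c (i + e) = c i

/-!
In convex position two chords cross exactly when their endpoints interleave, and the number of
crossings does not depend on where the cyclic labelling starts, so the block `R1` may be assumed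
to start at position `0`. If `x, y, z, w` chords join `R1–B1`, `R1–B2`, `B1–R2`, `R2–B2`, the block
sizes give `x + y = n/2 + 1`, `x + z = n/2`, `z + w = n/2 - 1`. No `R1–B1` chord crosses an
`R2–B2` chord and no `R1–B2` chord crosses a `B1–R2` chord, so at least
`xw + yz = 2(x - n/4)(x - n/4 - 1) + n²/8 ≥ n²/8` of the `n(n-1)/2` pairs of chords do not cross.
Four families of parallel chords attain the bound.
-/

def orient (a b c : ℝ × ℝ) : ℝ := (b.1 - a.1) * (c.2 - a.2) - (b.2 - a.2) * (c.1 - a.1)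

lemma orient_rotate (a b c : ℝ × ℝ) : orient a b c = orient b c a := by unfold orient; ring

lemma orient_swap (a b c : ℝ × ℝ) : orient a c b = -orient a b c := by unfold orient; ring

lemma orient_lineMap (a b u v : ℝ × ℝ) (θ : ℝ) :
    orient a b ((1 - θ) • u + θ • v) = (1 - θ) * orient a b u + θ * orient a b v := by
  simp only [orient, Prod.fst_add, Prod.snd_add, Prod.smul_fst, Prod.smul_snd, smul_eq_mul]
  ring

lemma mem_openSegment_iff_lineMap {a b x : ℝ × ℝ} :
    x ∈ openSegment ℝ a b ↔ ∃ θ : ℝ, 0 < θ ∧ θ < 1 ∧ (1 - θ) • a + θ • b = x := by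
  simp [openSegment_eq_image, and_assoc]

lemma SegCross.symm {a b c d : ℝ × ℝ} (h : SegCross a b c d) : SegCross c d a b :=
  let ⟨x, hab, hcd⟩ := h; ⟨x, hcd, hab⟩

lemma segCross_comm_left {a b c d : ℝ × ℝ} : SegCross b a c d ↔ SegCross a b c d := by
  simp only [SegCross, openSegment_symm]

lemma segCross_comm_right {a b c d : ℝ × ℝ} : SegCross a b d c ↔ SegCross a b c d := by
  simp only [SegCross, openSegment_symm]

/-- The open segment `ab` lies on the line `ab`, which the open segment `cd` avoids when
`c` and `d` are strictly on the same side of it. -/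
lemma not_segCross_of_orient_mul_pos {a b c d : ℝ × ℝ} (h : 0 < orient a b c * orient a b d) :
    ¬ SegCross a b c d := by
  rintro ⟨x, hab, hcd⟩
  obtain ⟨θ, -, -, rfl⟩ := mem_openSegment_iff_lineMap.mp hab
  obtain ⟨φ, hφ0, hφ1, hx⟩ := mem_openSegment_iff_lineMap.mp hcd
  have on_line : orient a b ((1 - θ) • a + θ • b) = 0 := by
    rw [orient_lineMap]; simp only [orient]; ring
  rw [← hx, orient_lineMap] at on_line
  rcases mul_pos_iff.mp h with ⟨hc, hd⟩ | ⟨hc, hd⟩ <;> nlinarith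

lemma segCross_of_orient {a b c d : ℝ × ℝ} (hc : 0 < orient a b c) (hd : orient a b d < 0)
    (ha : orient c d a < 0) (hb : 0 < orient c d b) : SegCross a b c d := by
  -- the parameters at which the line `cd` meets `ab` and the line `ab` meets `cd`
  set θ := orient c d a / (orient c d a - orient c d b)
  set φ := orient a b c / (orient a b c - orient a b d)
  have hθ : 0 < θ ∧ θ < 1 := by
    constructor
    · exact div_pos_of_neg_of_neg ha (by linarith)
    · rw [div_lt_one_of_neg (by linarith)]; linarith
  have hφ : 0 < φ ∧ φ < 1 := by
    constructor
    · exact div_pos hc (by linarith)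
    · rw [div_lt_one (by linarith)]; linarith
  have hne₁ : orient c d a - orient c d b ≠ 0 := by linarith
  have hne₂ : orient a b c - orient a b d ≠ 0 := by linarith
  have hmeet : (1 - θ) • a + θ • b = (1 - φ) • c + φ • d := by
    ext <;> simp only [Prod.fst_add, Prod.snd_add, Prod.smul_fst, Prod.smul_snd, smul_eq_mul, θ, φ]
      <;> field_simp <;> simp only [orient] <;> ring
  exact ⟨_, mem_openSegment_iff_lineMap.mpr ⟨θ, hθ.1, hθ.2, rfl⟩,
    mem_openSegment_iff_lineMap.mpr ⟨φ, hφ.1, hφ.2, hmeet.symm⟩⟩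

lemma ConvexCW.orient_neg {m : ℕ} {p : Fin m → ℝ × ℝ} (hp : ConvexCW m p) {i j k : Fin m}
    (hij : i < j) (hjk : j < k) : orient (p i) (p j) (p k) < 0 :=
  hp.2 i j k hij hjk

theorem ConvexCW.segCross_iff {m : ℕ} {p : Fin m → ℝ × ℝ} (hp : ConvexCW m p) {i j k l : Fin m}
    (hij : i < j) (hik : i < k) (hjl : j < l) (hkj : k ≠ j) (hkl : k ≠ l) :
    SegCross (p i) (p k) (p j) (p l) ↔ j < k ∧ k < l := by
  constructor
  · intro hcross
    by_contra hnot
    rcases hkj.lt_or_gt with hkj' | hjk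
    · have := mul_pos_of_neg_of_neg (hp.orient_neg hik hkj') (hp.orient_neg hik (hkj'.trans hjl))
      exact not_segCross_of_orient_mul_pos this hcross
    · have hlk : l < k := lt_of_le_of_ne (not_lt.mp fun h => hnot ⟨hjk, h⟩) hkl.symm
      have h₁ := hp.orient_neg hij hjk
      have h₂ := hp.orient_neg (hij.trans hjl) hlk
      rw [← neg_pos, ← orient_swap] at h₁ h₂
      exact not_segCross_of_orient_mul_pos (mul_pos h₁ h₂) hcross
  · rintro ⟨hjk, hkl⟩
    have h₁ := hp.orient_neg hij hjk
    have h₃ := hp.orient_neg hij hjl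
    have h₄ := hp.orient_neg hjk hkl
    rw [← neg_pos, ← orient_swap] at h₁ h₄
    rw [orient_rotate] at h₃
    exact segCross_of_orient h₁ (hp.orient_neg hik hkl) h₃ h₄

section Chords

variable {m : ℕ}

def crossPairs (f : Fin m → Fin m) : Finset (Fin m × Fin m) :=
  {q | q.1 < q.2 ∧ q.2 < f q.1 ∧ f q.1 < f q.2}

open Classical in
lemma crNum_eq_card_filter (p : Fin m → ℝ × ℝ) (f : Fin m → Fin m) :
    crNum m p f = #{q : Fin m × Fin m | q.1 < q.2 ∧ q.1 < f q.1 ∧ q.2 < f q.2 ∧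
      SegCross (p q.1) (p (f q.1)) (p q.2) (p (f q.2))} := by
  rw [crNum, Nat.card_eq_fintype_card, Fintype.card_subtype]

theorem crNum_eq_card_crossPairs {p : Fin m → ℝ × ℝ} {f : Fin m → Fin m} (hp : ConvexCW m p)
    (hf : Function.Involutive f) : crNum m p f = #(crossPairs f) := by
  rw [crNum_eq_card_filter, crossPairs]
  congr 1
  ext ⟨i, j⟩
  simp only [mem_filter, mem_univ, true_and]
  constructor
  · rintro ⟨hij, hi, hj, hcross⟩
    have hfij : f i ≠ j := fun h => (hij.trans hj).ne (by rw [← h, hf])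
    exact ⟨hij, (hp.segCross_iff hij hi hj hfij (hf.injective.ne hij.ne)).mp hcross⟩
  · rintro ⟨hij, hjk, hkl⟩
    have hi := hij.trans hjk
    have hj := hjk.trans hkl
    exact ⟨hij, hi, hj, (hp.segCross_iff hij hi hj hjk.ne' hkl.ne).mpr ⟨hjk, hkl⟩⟩

end Chords

theorem two_mul_card_filter_of_involutive {β : Type*} [Fintype β] {g : β → β}
    (hg : Function.Involutive g) (P R : β → Prop) [DecidablePred P] [DecidablePred R]
    (hP : ∀ x, P x → P (g x)) (hR : ∀ x, P x → (R (g x) ↔ ¬ R x)) :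
    2 * #{x | P x ∧ R x} = #{x | P x} := by
  have hswap : #{x | P x ∧ R x} = #{x | P x ∧ ¬ R x} := by
    refine card_nbij' g g ?_ ?_ (fun x _ => hg x) (fun x _ => hg x)
    · intro x hx
      simp only [coe_filter, mem_univ, true_and, Set.mem_ofPred_eq] at hx ⊢
      exact ⟨hP x hx.1, by simpa [hR x hx.1] using hx.2⟩
    · intro x hx
      simp only [coe_filter, mem_univ, true_and, Set.mem_ofPred_eq] at hx ⊢
      have := hR x hx.1
      exact ⟨hP x hx.1, by tauto⟩
  rw [two_mul, ← card_filter_add_card_filter_not (s := {x | P x}) R]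
  simp only [filter_filter, hswap]

section Relabel

variable {m : ℕ}

open Classical in
/-- Unlike `crNum`, which picks a representative for each chord and each pair of chords by the
order of the labels, this count is evidently invariant under relabelling. -/
noncomputable def crossDarts (p : Fin m → ℝ × ℝ) (f : Fin m → Fin m) : Finset (Fin m × Fin m) :=
  {q | q.1 ≠ q.2 ∧ q.1 ≠ f q.2 ∧ SegCross (p q.1) (p (f q.1)) (p q.2) (p (f q.2))}

lemma mem_crossDarts {p : Fin m → ℝ × ℝ} {f : Fin m → Fin m} {q : Fin m × Fin m} :
    q ∈ crossDarts p f ↔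
      q.1 ≠ q.2 ∧ q.1 ≠ f q.2 ∧ SegCross (p q.1) (p (f q.1)) (p q.2) (p (f q.2)) := by
  simp [crossDarts]

/-- Each crossing pair of chords has eight ordered pairs of endpoints. -/
theorem card_crossDarts {p : Fin m → ℝ × ℝ} {f : Fin m → Fin m} (hf : Function.Involutive f)
    (hfp : ∀ i, f i ≠ i) : #(crossDarts p f) = 8 * crNum m p f := by
  have hne : ∀ i j, i ≠ f j ↔ j ≠ f i := fun i j => by
    constructor <;> intro h h' <;> apply h <;> rw [h', hf]
  have hflip : ∀ i, f i < i ↔ ¬ i < f i := fun i =>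
    ⟨fun h => h.asymm, fun h => lt_of_le_of_ne (not_lt.mp h) (hfp i)⟩
  have flip₂ := two_mul_card_filter_of_involutive (g := fun q : Fin m × Fin m => (q.1, f q.2))
    (fun q => by simp [hf q.2]) (· ∈ crossDarts p f) (fun q => q.2 < f q.2)
    (fun q hq => by
      simp only [mem_crossDarts, hf q.2, segCross_comm_right] at hq ⊢
      exact ⟨hq.2.1, hq.1, hq.2.2⟩)
    (fun q _ => by simp only [hf q.2, hflip])
  have flip₁ := two_mul_card_filter_of_involutive (g := fun q : Fin m × Fin m => (f q.1, q.2))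
    (fun q => by simp [hf q.1]) (fun q => q ∈ crossDarts p f ∧ q.2 < f q.2)
    (fun q => q.1 < f q.1)
    (fun q hq => by
      simp only [mem_crossDarts, hf q.1, segCross_comm_left] at hq ⊢
      exact ⟨⟨((hne _ _).mp hq.1.2.1).symm, hf.injective.ne hq.1.1, hq.1.2.2⟩, hq.2⟩)
    (fun q _ => by simp only [hf q.1, hflip])
  have swap := two_mul_card_filter_of_involutive (g := Prod.swap) Prod.swap_swap
    (fun q => (q ∈ crossDarts p f ∧ q.2 < f q.2) ∧ q.1 < f q.1) (fun q => q.1 < q.2)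
    (fun q hq => by
      obtain ⟨⟨hq, hj⟩, hi⟩ := hq
      rw [mem_crossDarts] at hq
      refine ⟨⟨mem_crossDarts.mpr ⟨hq.1.symm, (hne _ _).mp hq.2.1, hq.2.2.symm⟩, hi⟩, hj⟩)
    (fun q hq => by
      simp only [Prod.fst_swap, Prod.snd_swap, not_lt]
      exact ⟨le_of_lt, fun h => lt_of_le_of_ne h (mem_crossDarts.mp hq.1.1).1.symm⟩)
  have hcr : crNum m p f = #{q : Fin m × Fin m |
      ((q ∈ crossDarts p f ∧ q.2 < f q.2) ∧ q.1 < f q.1) ∧ q.1 < q.2} := by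
    rw [crNum_eq_card_filter]
    congr 1
    ext q
    simp only [mem_filter, mem_univ, true_and, mem_crossDarts]
    constructor
    · rintro ⟨hij, hi, hj, hcross⟩
      exact ⟨⟨⟨⟨hij.ne, (hij.trans hj).ne, hcross⟩, hj⟩, hi⟩, hij⟩
    · rintro ⟨⟨⟨⟨-, -, hcross⟩, hj⟩, hi⟩, hij⟩
      exact ⟨hij, hi, hj, hcross⟩
  rw [filter_univ_mem] at flip₂
  omega

theorem crNum_conj {p : Fin m → ℝ × ℝ} {f : Fin m → Fin m} (hf : Function.Involutive f)
    (hfp : ∀ i, f i ≠ i) (σ : Equiv.Perm (Fin m)) :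
    crNum m (p ∘ σ) (σ.symm ∘ f ∘ σ) = crNum m p f := by
  have hf' : Function.Involutive (σ.symm ∘ f ∘ σ) := fun i => by simp [hf (σ i)]
  have hfp' : ∀ i, (σ.symm ∘ f ∘ σ) i ≠ i := fun i h =>
    hfp (σ i) (by simpa [Equiv.symm_apply_eq] using h)
  have hdarts : #(crossDarts (p ∘ σ) (σ.symm ∘ f ∘ σ)) = #(crossDarts p f) := by
    refine card_nbij' (Prod.map σ σ) (Prod.map σ.symm σ.symm) ?_ ?_ (fun q _ => by ext <;> simp)
      (fun q _ => by ext <;> simp) <;> intro q <;> simp [mem_crossDarts, Equiv.eq_symm_apply]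
  rw [card_crossDarts hf' hfp', card_crossDarts hf hfp] at hdarts
  omega

end Relabel

lemma Fin.lt_add_right_cyclic {m : ℕ} {i j k : Fin m} (hij : i < j) (hjk : j < k) (t : Fin m) :
    (i + t < j + t ∧ j + t < k + t) ∨ (j + t < k + t ∧ k + t < i + t) ∨
      (k + t < i + t ∧ i + t < j + t) := by
  simp only [Fin.lt_def, Fin.val_add_eq_ite] at hij hjk ⊢
  have := k.isLt
  split_ifs <;> omega

theorem ConvexCW.comp_addRight {m : ℕ} [NeZero m] {p : Fin m → ℝ × ℝ} (hp : ConvexCW m p)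
    (t : Fin m) : ConvexCW m (p ∘ Equiv.addRight t) := by
  refine ⟨hp.1.comp (Equiv.injective _), fun i j k hij hjk => ?_⟩
  change orient (p (i + t)) (p (j + t)) (p (k + t)) < 0
  rcases Fin.lt_add_right_cyclic hij hjk t with ⟨h₁, h₂⟩ | ⟨h₁, h₂⟩ | ⟨h₁, h₂⟩
  · exact hp.orient_neg h₁ h₂
  · rw [orient_rotate]; exact hp.orient_neg h₁ h₂
  · rw [orient_rotate, orient_rotate]; exact hp.orient_neg h₁ h₂

theorem IsBPM.conj {m : ℕ} {c : Fin m → Bool} {f : Fin m → Fin m} (hf : IsBPM m c f)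
    (σ : Equiv.Perm (Fin m)) : IsBPM m (c ∘ σ) (σ.symm ∘ f ∘ σ) := by
  refine ⟨fun i => by simp [hf.1 (σ i)], fun i h => hf.2.1 (σ i) ?_,
    fun i => by simpa using hf.2.2 (σ i)⟩
  simpa [Equiv.symm_apply_eq] using h

lemma FourBlockAt.apply_add_eq_true_iff {n : ℕ} {c : Fin (2 * n) → Bool} {t : Fin (2 * n)}
    {r1 b1 r2 b2 : ℕ} (h : FourBlockAt n c t r1 b1 r2 b2) (i : Fin (2 * n)) :
    c (i + t) = true ↔ (i : ℕ) < r1 ∨ r1 + b1 ≤ (i : ℕ) ∧ (i : ℕ) < r1 + b1 + r2 := by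
  rw [add_comm, h.2.2.2.2.2.2 i]
  split_ifs <;> simp <;> omega

section Blocks

variable {m : ℕ}

def arc (m lo hi : ℕ) : Finset (Fin m) := {i | lo ≤ (i : ℕ) ∧ (i : ℕ) < hi}

@[simp] lemma mem_arc {lo hi : ℕ} {i : Fin m} : i ∈ arc m lo hi ↔ lo ≤ (i : ℕ) ∧ (i : ℕ) < hi := by
  simp [arc]

lemma card_arc {lo hi : ℕ} (h : hi ≤ m) : #(arc m lo hi) = hi - lo := by
  rw [← Nat.card_Ico lo hi, ← card_map Fin.valEmbedding]
  congr 1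
  ext v
  simp only [mem_map, mem_arc, Fin.valEmbedding_apply, mem_Ico]
  constructor
  · rintro ⟨i, hi, rfl⟩
    exact hi
  · intro hv
    exact ⟨⟨v, by omega⟩, hv, rfl⟩

def chordPairs (f : Fin m → Fin m) : Finset (Fin m × Fin m) :=
  {q | q.1 < q.2 ∧ q.1 < f q.1 ∧ q.2 < f q.2}

theorem card_chordPairs {f : Fin m → Fin m} (hf : Function.Involutive f) (hfp : ∀ i, f i ≠ i) :
    #(chordPairs f) = (m / 2).choose 2 := by
  have hreps := two_mul_card_filter_of_involutive hf (fun _ => True) (fun i => i < f i)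
    (fun _ _ => trivial) (fun i _ => by
      rw [hf i]; exact ⟨fun h => h.asymm, fun h => lt_of_le_of_ne (not_lt.mp h) (hfp i)⟩)
  simp only [true_and, filter_true, card_univ, Fintype.card_fin] at hreps
  set R : Finset (Fin m) := {i | i < f i}
  have : chordPairs f = {q ∈ R ×ˢ R | q.1 < q.2} := by
    ext q
    simp only [chordPairs, R, mem_filter, mem_univ, true_and, mem_product]
    tauto
  rw [this, card_product_filter_lt]
  congr 1
  omega

def chordsBetween (f : Fin m → Fin m) (X Y : Finset (Fin m)) : Finset (Fin m) := {i ∈ X | f i ∈ Y}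

lemma card_chordsBetween_comm {f : Fin m → Fin m} (hf : Function.Involutive f)
    (X Y : Finset (Fin m)) : #(chordsBetween f X Y) = #(chordsBetween f Y X) := by
  refine card_nbij' f f ?_ ?_ (fun i _ => hf i) (fun i _ => hf i) <;>
    intro i <;> simp [chordsBetween, hf i, and_comm]

lemma card_eq_card_chordsBetween_add {f : Fin m → Fin m} {X Y Z : Finset (Fin m)}
    (hXYZ : ∀ i ∈ X, f i ∈ Y ∨ f i ∈ Z) (hYZ : Disjoint Y Z) :
    #X = #(chordsBetween f X Y) + #(chordsBetween f X Z) := by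
  rw [← card_filter_add_card_filter_not (s := X) (f · ∈ Y)]
  congr 2
  refine filter_congr fun i hi => ?_
  rcases hXYZ i hi with h | h
  · simp [h, disjoint_left.mp hYZ h]
  · simp [h, disjoint_right.mp hYZ h]

/-- Chords from the first to the second of four consecutive arcs never cross chords from the
third to the fourth, nor do chords from the first to the fourth cross chords from the second to
the third. -/
theorem card_crossPairs_add_le (f : Fin m → Fin m) (a b c : ℕ) :
    #(crossPairs f)
      + #(chordsBetween f (arc m 0 a) (arc m a b)) * #(chordsBetween f (arc m b c) (arc m c m))
      + #(chordsBetween f (arc m 0 a) (arc m c m)) * #(chordsBetween f (arc m a b) (arc m b c))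
      ≤ #(chordPairs f) := by
  rw [← card_product, ← card_product, ← card_union_of_disjoint, ← card_union_of_disjoint]
  · refine card_le_card (union_subset (union_subset ?_ ?_) ?_) <;> intro q <;>
      simp only [crossPairs, chordPairs, chordsBetween, mem_product, mem_filter, mem_univ,
        true_and, mem_arc, Fin.lt_def] <;> omega
  all_goals
    refine disjoint_left.mpr fun q hq hq' => ?_
    simp only [crossPairs, chordsBetween, mem_union, mem_product, mem_filter, mem_univ,
      true_and, mem_arc, Fin.lt_def] at hq hq'
    omega

end Blocks

theorem exists_crNum_add_le_of_blocks {n r1 b1 r2 : ℕ} {p : Fin (2 * n) → ℝ × ℝ}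
    {c : Fin (2 * n) → Bool} {f : Fin (2 * n) → Fin (2 * n)} (hp : ConvexCW (2 * n) p)
    (hlen : r1 + b1 + r2 ≤ 2 * n)
    (hc : ∀ i : Fin (2 * n), c i = true ↔ (i : ℕ) < r1 ∨ r1 + b1 ≤ (i : ℕ) ∧ (i : ℕ) < r1 + b1 + r2)
    (hf : IsBPM (2 * n) c f) :
    ∃ x y z w : ℕ, x + y = r1 ∧ x + z = b1 ∧ z + w = r2 ∧
      crNum (2 * n) p f + x * w + y * z ≤ n.choose 2 := by
  obtain ⟨hinv, hfp, hcol⟩ := hf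
  set A := arc (2 * n) 0 r1
  set B := arc (2 * n) r1 (r1 + b1)
  set C := arc (2 * n) (r1 + b1) (r1 + b1 + r2)
  set D := arc (2 * n) (r1 + b1 + r2) (2 * n)
  have hred : ∀ i : Fin (2 * n), ((f i : ℕ) < r1 ∨ r1 + b1 ≤ (f i : ℕ) ∧ (f i : ℕ) < r1 + b1 + r2)
      ↔ ¬((i : ℕ) < r1 ∨ r1 + b1 ≤ (i : ℕ) ∧ (i : ℕ) < r1 + b1 + r2) := fun i => by
    rw [← hc, ← hc]
    have := hcol i
    revert this
    cases c (f i) <;> cases c i <;> decide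
  have hsplit : ∀ {lo hi : ℕ} {Y Z : Finset (Fin (2 * n))}, hi ≤ 2 * n → Disjoint Y Z →
      (∀ i ∈ arc (2 * n) lo hi, f i ∈ Y ∨ f i ∈ Z) →
      hi - lo =
        #(chordsBetween f (arc (2 * n) lo hi) Y) + #(chordsBetween f (arc (2 * n) lo hi) Z) :=
    fun hhi hYZ hto => by rw [← card_arc hhi, card_eq_card_chordsBetween_add hto hYZ]
  have hdisj : ∀ {lo hi lo' hi'}, hi ≤ lo' → Disjoint (arc (2 * n) lo hi) (arc (2 * n) lo' hi') :=
    fun h => disjoint_left.mpr fun i hi hi' => by simp only [mem_arc] at hi hi'; omega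
  have hA : r1 - 0 = #(chordsBetween f A B) + #(chordsBetween f A D) :=
    hsplit (Y := B) (Z := D) (by omega) (hdisj (by omega)) fun i hi => by
      simp only [B, D, mem_arc] at hi ⊢; have := hred i; have := (f i).isLt; omega
  have hB : r1 + b1 - r1 = #(chordsBetween f B A) + #(chordsBetween f B C) :=
    hsplit (Y := A) (Z := C) (by omega) (hdisj (by omega)) fun i hi => by
      simp only [A, C, mem_arc] at hi ⊢; have := hred i; omega
  have hC : r1 + b1 + r2 - (r1 + b1) = #(chordsBetween f C B) + #(chordsBetween f C D) :=
    hsplit (Y := B) (Z := D) (by omega) (hdisj (by omega)) fun i hi => by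
      simp only [B, D, mem_arc] at hi ⊢; have := hred i; have := (f i).isLt; omega
  rw [card_chordsBetween_comm hinv] at hB hC
  refine ⟨#(chordsBetween f A B), #(chordsBetween f A D), #(chordsBetween f B C),
    #(chordsBetween f C D), by omega, by omega, by omega, ?_⟩
  have hcard := card_chordPairs hinv hfp
  rw [Nat.mul_div_cancel_left n two_pos] at hcard
  rw [crNum_eq_card_crossPairs hp hinv, ← hcard]
  exact card_crossPairs_add_le f r1 (r1 + b1) (r1 + b1 + r2)

theorem crNum_le_of_blocks {n : ℕ} {p : Fin (2 * n) → ℝ × ℝ} {c : Fin (2 * n) → Bool}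
    {f : Fin (2 * n) → Fin (2 * n)} (hn : n % 4 = 0) (hn4 : 4 ≤ n) (hp : ConvexCW (2 * n) p)
    (hc : ∀ i : Fin (2 * n), c i = true ↔ (i : ℕ) < n / 2 + 1 ∨
      n / 2 + 1 + n / 2 ≤ (i : ℕ) ∧ (i : ℕ) < n / 2 + 1 + n / 2 + (n / 2 - 1))
    (hf : IsBPM (2 * n) c f) :
    (crNum (2 * n) p f : ℚ) ≤ 3 * (n : ℚ) ^ 2 / 8 - (n : ℚ) / 2 := by
  obtain ⟨x, y, z, w, hxy, hxz, hzw, hcr⟩ := exists_crNum_add_le_of_blocks hp (by omega) hc hf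
  obtain ⟨s, rfl⟩ := Nat.dvd_of_mod_eq_zero hn
  have hnoncross : 2 * (s : ℤ) ^ 2 ≤ x * w + y * z := by
    have hy : (y : ℤ) = 2 * s + 1 - x := by omega
    have hz : (z : ℤ) = 2 * s - x := by omega
    have hw : (w : ℤ) = x - 1 := by omega
    rw [hy, hz, hw]
    nlinarith [Int.le_self_sq (x - s)]
  have hcrQ : (crNum (2 * (4 * s)) p f : ℚ) + x * w + y * z ≤
      (4 * s : ℕ) * ((4 * s : ℕ) - 1) / 2 := by
    rw [← Nat.cast_choose_two]
    exact_mod_cast hcr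
  have : (2 * (s : ℚ) ^ 2) ≤ x * w + y * z := by exact_mod_cast hnoncross
  push_cast at hcrQ ⊢
  linarith

/-- Four families of parallel chords, `[0, s) → [3s+1, 4s+1)`, `[s, 2s] → [6s, 7s]`,
`[2s+1, 3s] → [5s, 6s)` and `[4s+1, 5s) → [7s+1, 8s)`. Two chords of one family always cross,
and of two different families only the first and the fourth, and the second and the third, do
not; this leaves `s(s-1) + (s+1)s = 2s²` non-crossing pairs. -/
def extremalPartner (s v : ℕ) : ℕ :=
  if v < s then v + (3 * s + 1)
  else if v < 2 * s + 1 then v + 5 * s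
  else if v < 3 * s + 1 then v + (3 * s - 1)
  else if v < 4 * s + 1 then v - (3 * s + 1)
  else if v < 5 * s then v + 3 * s
  else if v < 6 * s then v - (3 * s - 1)
  else if v < 7 * s + 1 then v - 5 * s
  else v - 3 * s

lemma extremalPartner_cases (s v : ℕ) :
    v < s ∧ extremalPartner s v = v + (3 * s + 1) ∨
    s ≤ v ∧ v < 2 * s + 1 ∧ extremalPartner s v = v + 5 * s ∨
    2 * s + 1 ≤ v ∧ v < 3 * s + 1 ∧ extremalPartner s v = v + (3 * s - 1) ∨
    3 * s + 1 ≤ v ∧ v < 4 * s + 1 ∧ extremalPartner s v = v - (3 * s + 1) ∨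
    4 * s + 1 ≤ v ∧ v < 5 * s ∧ extremalPartner s v = v + 3 * s ∨
    5 * s ≤ v ∧ v < 6 * s ∧ extremalPartner s v = v - (3 * s - 1) ∨
    6 * s ≤ v ∧ v < 7 * s + 1 ∧ extremalPartner s v = v - 5 * s ∨
    7 * s + 1 ≤ v ∧ extremalPartner s v = v - 3 * s := by
  unfold extremalPartner
  split_ifs <;> omega

lemma card_crossPairs_add_eq_of_extremalPartner {m s : ℕ} (hm : m = 8 * s) (hs : 1 ≤ s)
    {f : Fin m → Fin m} (hf : ∀ i, (f i : ℕ) = extremalPartner s i) :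
    #(crossPairs f) + (s * (s - 1) + (s + 1) * s) = #(chordPairs f) := by
  subst hm
  set N₁ := arc (8 * s) 0 s ×ˢ arc (8 * s) (4 * s + 1) (5 * s)
  set N₂ := arc (8 * s) s (2 * s + 1) ×ˢ arc (8 * s) (2 * s + 1) (3 * s + 1)
  have hsplit : chordPairs f = crossPairs f ∪ (N₁ ∪ N₂) := by
    ext ⟨i, j⟩
    simp only [chordPairs, crossPairs, N₁, N₂, mem_union, mem_product, mem_filter, mem_univ,
      true_and, mem_arc, Fin.lt_def, hf]
    have := extremalPartner_cases s i
    have := extremalPartner_cases s j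
    omega
  have hdisj : Disjoint (crossPairs f) (N₁ ∪ N₂) := by
    refine disjoint_left.mpr fun ⟨i, j⟩ hcross hN => ?_
    simp only [crossPairs, N₁, N₂, mem_union, mem_product, mem_filter, mem_univ, true_and,
      mem_arc, Fin.lt_def, hf] at hcross hN
    have := extremalPartner_cases s i
    have := extremalPartner_cases s j
    omega
  have hN : Disjoint N₁ N₂ := by
    refine disjoint_left.mpr fun q hq hq' => ?_
    simp only [N₁, N₂, mem_product, mem_arc] at hq hq'
    omega
  rw [hsplit, card_union_of_disjoint hdisj, card_union_of_disjoint hN, card_product, card_product,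
    card_arc (by omega), card_arc (by omega), card_arc (by omega), card_arc (by omega)]
  congr 3 <;> omega

theorem exists_crNum_eq_of_blocks {n : ℕ} {p : Fin (2 * n) → ℝ × ℝ} {c : Fin (2 * n) → Bool}
    (hn : n % 4 = 0) (hn4 : 4 ≤ n) (hp : ConvexCW (2 * n) p)
    (hc : ∀ i : Fin (2 * n), c i = true ↔ (i : ℕ) < n / 2 + 1 ∨
      n / 2 + 1 + n / 2 ≤ (i : ℕ) ∧ (i : ℕ) < n / 2 + 1 + n / 2 + (n / 2 - 1)) :
    ∃ f : Fin (2 * n) → Fin (2 * n), IsBPM (2 * n) c f ∧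
      (crNum (2 * n) p f : ℚ) = 3 * (n : ℚ) ^ 2 / 8 - (n : ℚ) / 2 := by
  obtain ⟨s, rfl⟩ := Nat.dvd_of_mod_eq_zero hn
  let f : Fin (2 * (4 * s)) → Fin (2 * (4 * s)) := fun i =>
    ⟨extremalPartner s i, by have := extremalPartner_cases s i; omega⟩
  have hinv : Function.Involutive f := fun i => by
    ext
    have := extremalPartner_cases s i
    have := extremalPartner_cases s (extremalPartner s i)
    simp only [f]
    omega
  have hfp : ∀ i, f i ≠ i := fun i h => by
    have := extremalPartner_cases s i
    have := congrArg Fin.val h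
    simp only [f] at this
    omega
  have hcol : ∀ i, c (f i) ≠ c i := fun i => by
    rw [Ne, Bool.eq_iff_iff, hc, hc]
    have := extremalPartner_cases s i
    simp only [f]
    omega
  refine ⟨f, ⟨hinv, hfp, hcol⟩, ?_⟩
  have hcard :=
    card_crossPairs_add_eq_of_extremalPartner (by ring) (by omega) (f := f) (fun _ => rfl)
  rw [card_chordPairs hinv hfp, Nat.mul_div_cancel_left _ two_pos] at hcard
  have hcardQ : (#(crossPairs f) : ℚ) + (s * (s - 1) + (s + 1) * s : ℕ) =
      ((4 * s).choose 2 : ℕ) := by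
    exact_mod_cast hcard
  rw [Nat.cast_choose_two] at hcardQ
  push_cast [Nat.cast_sub (show 1 ≤ s by omega)] at hcardQ ⊢
  rw [crNum_eq_card_crossPairs hp hinv]
  linarith

theorem stmt12_general (n : ℕ) (hn4 : n % 4 = 0)
    (p : Fin (2 * n) → ℝ × ℝ) (c : Fin (2 * n) → Bool)
    (hconv : ConvexCW (2 * n) p)
    (hblock : ∃ t : Fin (2 * n),
      FourBlockAt n c t (n / 2 + 1) (n / 2) (n / 2 - 1) (n / 2)) :
    (∀ f : Fin (2 * n) → Fin (2 * n), IsBPM (2 * n) c f →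
        (crNum (2 * n) p f : ℚ) ≤ 3 * (n : ℚ) ^ 2 / 8 - (n : ℚ) / 2) ∧
    (∃ f : Fin (2 * n) → Fin (2 * n), IsBPM (2 * n) c f ∧
        (crNum (2 * n) p f : ℚ) = 3 * (n : ℚ) ^ 2 / 8 - (n : ℚ) / 2) := by
  obtain ⟨t, hb⟩ := hblock
  have hn : 4 ≤ n := by have := hb.2.2.1; omega
  have : NeZero (2 * n) := ⟨by omega⟩
  let σ := Equiv.addRight t
  have hp := hconv.comp_addRight t
  have hc : ∀ i, (c ∘ σ) i = true ↔ _ := hb.apply_add_eq_true_iff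
  constructor
  · intro f hf
    rw [← crNum_conj hf.1 hf.2.1 σ]
    exact crNum_le_of_blocks hn4 hn hp hc (hf.conj σ)
  · obtain ⟨g, hg, hcr⟩ := exists_crNum_eq_of_blocks hn4 hn hp hc
    have hg' := hg.conj σ.symm
    have hcr' := crNum_conj hg.1 hg.2.1 σ.symm (p := p ∘ σ)
    simp only [Equiv.symm_symm, Function.comp_assoc, Equiv.self_comp_symm, Function.comp_id]
      at hg' hcr'
    exact ⟨_, hg', by rw [hcr']; exact hcr⟩

/-- For `n ≡ 0 (mod 4)` and a 4-block coloring with block sizes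
`n/2+1, n/2, n/2−1, n/2`, the maximum number of crossings of a bichromatic perfect
matching equals `3n²/8 − n/2`. -/
theorem stmt12 (n : ℕ) (hn4 : n % 4 = 0)
    (p : Fin (2 * n) → ℝ × ℝ) (c : Fin (2 * n) → Bool)
    (hconv : ConvexCW (2 * n) p) (hcol : Bichrom n c)
    (hblock : ∃ t : Fin (2 * n),
      FourBlockAt n c t (n / 2 + 1) (n / 2) (n / 2 - 1) (n / 2)) :
    (∀ f : Fin (2 * n) → Fin (2 * n), IsBPM (2 * n) c f →
        (crNum (2 * n) p f : ℚ) ≤ 3 * (n : ℚ) ^ 2 / 8 - (n : ℚ) / 2) ∧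
    (∃ f : Fin (2 * n) → Fin (2 * n), IsBPM (2 * n) c f ∧
        (crNum (2 * n) p f : ℚ) = 3 * (n : ℚ) ^ 2 / 8 - (n : ℚ) / 2) :=
  stmt12_general n hn4 p c hconv hblock
end

section
/- Let P be a bichromatic convex point set with n red and n blue points whose coloring is a 4-block coloring with blocks R1, B1, R2, B2 in clockwise order, and let M be a max-crossing bichromatic perfect matching on P. Then there exists an integer a with 0 ≤ a ≤ min(|R1|, |B1|) such that, in clockwise order, the first a points of R1 are matched by M to points of B1 and the remaining |R1| − a points of R1 are matched to points of B2, and the first |B1| − a points of B1 are matched to points of R2. -/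
open Finset

noncomputable section

def dor (x y z : ℝ × ℝ) : ℝ := (y.1-x.1)*(z.2-x.2)-(y.2-x.2)*(z.1-x.1)

lemma dor_combo (A B C D : ℝ × ℝ) (a b : ℝ) (h : a + b = 1) :
    dor A B (a • C + b • D) = a * dor A B C + b * dor A B D := by
  have hb : b = 1 - a := by linarith
  subst hb
  simp [dor, Prod.smul_def, Prod.fst_add, Prod.snd_add, smul_eq_mul]
  ring

lemma noSegCross (A B C D : ℝ × ℝ) (h : 0 < dor A B C * dor A B D) :
    ¬ SegCross A B C D := by
  rintro ⟨x, hx1, hx2⟩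
  obtain ⟨a, b, ha, hb, hab, hx⟩ := hx1
  obtain ⟨a', b', ha', hb', hab', hx'⟩ := hx2
  have e1 : dor A B A = 0 := by simp only [dor]; ring
  have e2 : dor A B B = 0 := by simp only [dor]; ring
  have h1 : dor A B x = 0 := by
    rw [← hx, dor_combo A B A B a b hab, e1, e2]; ring
  have h2 : dor A B x = a' * dor A B C + b' * dor A B D := by
    rw [← hx', dor_combo A B C D a' b' hab']
  rcases mul_pos_iff.mp h with ⟨hc, hd⟩ | ⟨hc, hd⟩
  · nlinarith [mul_pos ha' hc, mul_pos hb' hd]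
  · nlinarith [mul_neg_of_pos_of_neg ha' hc, mul_neg_of_pos_of_neg hb' hd]

lemma segCross_of (A B C D : ℝ × ℝ)
    (hC : 0 < dor A B C) (hD : dor A B D < 0)
    (hA : dor C D A < 0) (hB : 0 < dor C D B) :
    SegCross A B C D := by
  set s : ℝ := dor C D A / (dor C D A - dor C D B) with hs
  set t : ℝ := dor A B C / (dor A B C - dor A B D) with ht
  have hden1 : dor C D A - dor C D B < 0 := by linarith
  have hden2 : 0 < dor A B C - dor A B D := by linarith
  have hs0 : 0 < s := by
    apply div_pos_of_neg_of_neg (by linarith) hden1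
  have hs1 : s < 1 := by
    rw [hs, div_lt_one_of_neg hden1]; linarith
  have ht0 : 0 < t := div_pos hC hden2
  have ht1 : t < 1 := by
    rw [ht, div_lt_one hden2]; linarith
  refine ⟨(1 - s) • A + s • B, ⟨1 - s, s, by linarith, hs0, by ring, rfl⟩,
    ⟨1 - t, t, by linarith, ht0, by ring, ?_⟩⟩
  have key : (1 - t) • C + t • D = (1 - s) • A + s • B := by
    have h1 : dor C D A - dor C D B ≠ 0 := ne_of_lt hden1
    have h2 : dor A B C - dor A B D ≠ 0 := ne_of_gt hden2
    apply Prod.ext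
    · simp only [Prod.fst_add, Prod.smul_def, smul_eq_mul, hs, ht]
      field_simp
      simp only [dor]
      ring
    · simp only [Prod.snd_add, Prod.smul_def, smul_eq_mul, hs, ht]
      field_simp
      simp only [dor]
      ring
  exact key

/-- combinatorial crossing of chords {a,b}, {c,d} on the convex polygon -/
def CrN (a b c d : ℕ) : Prop :=
  ((min a b < c ∧ c < max a b) ∧ ¬(min a b < d ∧ d < max a b)) ∨
  (¬(min a b < c ∧ c < max a b) ∧ (min a b < d ∧ d < max a b))

lemma CrN_swap_left {a b c d : ℕ} : CrN a b c d ↔ CrN b a c d := by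
  unfold CrN; omega

lemma CrN_swap_right {a b c d : ℕ} : CrN a b c d ↔ CrN a b d c := by
  unfold CrN; omega

lemma CrN_comm {a b c d : ℕ} (hab : a ≠ b) (hcd : c ≠ d) (hac : a ≠ c)
    (had : a ≠ d) (hbc : b ≠ c) (hbd : b ≠ d) : CrN a b c d ↔ CrN c d a b := by
  unfold CrN; omega

lemma SegCross_swap_left {A B C D : ℝ × ℝ} : SegCross A B C D ↔ SegCross B A C D := by
  unfold SegCross
  simp_rw [openSegment_symm ℝ A B]

lemma SegCross_swap_right {A B C D : ℝ × ℝ} : SegCross A B C D ↔ SegCross A B D C := by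
  unfold SegCross
  simp_rw [openSegment_symm ℝ C D]

lemma SegCross_comm {A B C D : ℝ × ℝ} : SegCross A B C D ↔ SegCross C D A B := by
  unfold SegCross
  constructor <;> rintro ⟨x, h1, h2⟩ <;> exact ⟨x, h2, h1⟩

section
variable {m : ℕ} {p : Fin m → ℝ × ℝ}

lemma dor_neg (hconv : ConvexCW m p) {i j k : Fin m} (h1 : (i:ℕ) < j) (h2 : (j:ℕ) < k) :
    dor (p i) (p j) (p k) < 0 := by
  exact hconv.2 i j k h1 h2

lemma dor_cyc (A B C : ℝ × ℝ) : dor A B C = dor B C A := by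
  simp only [dor]; ring

lemma dor_swap (A B C : ℝ × ℝ) : dor A B C = - dor A C B := by
  simp only [dor]; ring

/-- chords (a,c) and (b,d) for sorted a<b<c<d cross -/
lemma cross_sorted (hconv : ConvexCW m p) {a b c d : Fin m} (h1 : (a:ℕ) < b) (h2 : (b:ℕ) < c) (h3 : (c:ℕ) < d) :
    SegCross (p a) (p c) (p b) (p d) := by
  apply segCross_of
  · rw [dor_swap]; have := dor_neg hconv h1 h2; linarith
  · exact dor_neg hconv (h1.trans h2) h3
  · rw [dor_cyc, dor_cyc]; exact dor_neg hconv h1 (h2.trans h3)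
  · rw [dor_swap]; have := dor_neg hconv h2 h3; linarith

lemma nocross_adj (hconv : ConvexCW m p) {a b c d : Fin m} (h1 : (a:ℕ) < b) (h2 : (b:ℕ) < c) (h3 : (c:ℕ) < d) :
    ¬ SegCross (p a) (p b) (p c) (p d) := by
  apply noSegCross
  have hc := dor_neg hconv h1 h2
  have hd := dor_neg hconv h1 (h2.trans h3)
  nlinarith

lemma nocross_nest (hconv : ConvexCW m p) {a b c d : Fin m} (h1 : (a:ℕ) < b) (h2 : (b:ℕ) < c) (h3 : (c:ℕ) < d) :
    ¬ SegCross (p a) (p d) (p b) (p c) := by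
  apply noSegCross
  have hb := dor_neg hconv h1 (h2.trans h3)
  have hc := dor_neg hconv (h1.trans h2) h3
  rw [dor_swap (p a) (p d) (p b), dor_swap (p a) (p d) (p c)]
  nlinarith

lemma crIff_aux (hconv : ConvexCW m p) {a b c d : Fin m} (hab : (a:ℕ) < b) (hcd : (c:ℕ) < d) (hac : (a:ℕ) < c)
    (hbc : (b:ℕ) ≠ c) (hbd : (b:ℕ) ≠ d) :
    SegCross (p a) (p b) (p c) (p d) ↔ CrN a b c d := by
  rcases lt_or_gt_of_ne hbc with h | h
  · -- a<b<c<d disjoint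
    constructor
    · intro hs; exact absurd hs (nocross_adj hconv hab h hcd)
    · intro hcr; exfalso; revert hcr; unfold CrN; omega
  · rcases lt_or_gt_of_ne hbd with h2 | h2
    · -- a<c<b<d cross
      constructor
      · intro _; unfold CrN; omega
      · intro _; exact cross_sorted hconv hac h h2
    · -- a<c<d<b nested
      constructor
      · intro hs; exact absurd hs (nocross_nest hconv hac hcd h2)
      · intro hcr; exfalso; revert hcr; unfold CrN; omega

lemma crIff (hconv : ConvexCW m p) {a b c d : Fin m} (hab : a ≠ b) (hcd : c ≠ d) (hac : a ≠ c)
    (had : a ≠ d) (hbc : b ≠ c) (hbd : b ≠ d) :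
    SegCross (p a) (p b) (p c) (p d) ↔ CrN a b c d := by
  have vab := (Fin.val_ne_iff (a := a) (b := b)).2 hab
  have vcd := (Fin.val_ne_iff (a := c) (b := d)).2 hcd
  have vac := (Fin.val_ne_iff (a := a) (b := c)).2 hac
  have vad := (Fin.val_ne_iff (a := a) (b := d)).2 had
  have vbc := (Fin.val_ne_iff (a := b) (b := c)).2 hbc
  have vbd := (Fin.val_ne_iff (a := b) (b := d)).2 hbd
  -- reduce to a < b and c < d
  rcases lt_or_gt_of_ne vab with h1 | h1
  · rcases lt_or_gt_of_ne vcd with h2 | h2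
    · rcases lt_or_gt_of_ne vac with h3 | h3
      · exact crIff_aux hconv h1 h2 h3 vbc vbd
      · rw [SegCross_comm, CrN_comm vab vcd vac vad vbc vbd]
        exact crIff_aux hconv h2 h1 h3 (Ne.symm vad) (Ne.symm vbd)
    · rw [SegCross_swap_right, CrN_swap_right]
      rcases lt_or_gt_of_ne vad with h3 | h3
      · exact crIff_aux hconv h1 h2 h3 vbd vbc
      · rw [SegCross_comm, CrN_comm vab (Ne.symm vcd) vad vac vbd vbc]
        exact crIff_aux hconv h2 h1 h3 (Ne.symm vac) (Ne.symm vbc)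
  · rw [SegCross_swap_left, CrN_swap_left]
    rcases lt_or_gt_of_ne vcd with h2 | h2
    · rcases lt_or_gt_of_ne vbc with h3 | h3
      · exact crIff_aux hconv h1 h2 h3 vac vad
      · rw [SegCross_comm, CrN_comm (Ne.symm vab) vcd vbc vbd vac vad]
        exact crIff_aux hconv h2 h1 h3 (Ne.symm vbd) (Ne.symm vad)
    · rw [SegCross_swap_right, CrN_swap_right]
      rcases lt_or_gt_of_ne vbd with h3 | h3
      · exact crIff_aux hconv h1 h2 h3 vad vac
      · rw [SegCross_comm, CrN_comm (Ne.symm vab) (Ne.symm vcd) vbd vbc vad vac]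
        exact crIff_aux hconv h2 h1 h3 (Ne.symm vbc) (Ne.symm vac)
end

instance : ∀ a b c d : ℕ, Decidable (CrN a b c d) := fun a b c d => by
  unfold CrN; infer_instance

-- unique crossing pairing
lemma CrN_unique {u v w z : ℕ} (h1 : u ≠ v) (h2 : u ≠ w) (h3 : u ≠ z) (h4 : v ≠ w)
    (h5 : v ≠ z) (h6 : w ≠ z) (hcr : CrN u z v w) : ¬ CrN u v w z := by
  unfold CrN at *; omega

lemma key1 {s1 s2 u v w z : ℕ}
    (hs : s1 ≠ s2)
    (d1 : s1 ≠ u) (d2 : s1 ≠ v) (d3 : s1 ≠ w) (d4 : s1 ≠ z)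
    (e1 : s2 ≠ u) (e2 : s2 ≠ v) (e3 : s2 ≠ w) (e4 : s2 ≠ z)
    (h1 : u ≠ v) (h2 : u ≠ w) (h3 : u ≠ z) (h4 : v ≠ w) (h5 : v ≠ z) (h6 : w ≠ z)
    (hcr : CrN u z v w)
    (hol : CrN s1 s2 u v ∨ CrN s1 s2 w z) :
    CrN s1 s2 u z ∨ CrN s1 s2 v w := by
  unfold CrN at *; omega

lemma key2 {s1 s2 u v w z : ℕ}
    (hs : s1 ≠ s2)
    (d1 : s1 ≠ u) (d2 : s1 ≠ v) (d3 : s1 ≠ w) (d4 : s1 ≠ z)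
    (e1 : s2 ≠ u) (e2 : s2 ≠ v) (e3 : s2 ≠ w) (e4 : s2 ≠ z)
    (h1 : u ≠ v) (h2 : u ≠ w) (h3 : u ≠ z) (h4 : v ≠ w) (h5 : v ≠ z) (h6 : w ≠ z)
    (hcr : CrN u z v w)
    (hC : CrN s1 s2 u v) (hD : CrN s1 s2 w z) :
    CrN s1 s2 u z ∧ CrN s1 s2 v w := by
  unfold CrN at *; omega

lemma CrN_congr {a b c d a' b' c' d' : ℕ} (h1 : a = a' ∧ b = b' ∨ a = b' ∧ b = a')
    (h2 : c = c' ∧ d = d' ∨ c = d' ∧ d = c') : CrN a b c d ↔ CrN a' b' c' d' := by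
  unfold CrN; omega

-- cyclic crossing lemma core arithmetic: values after rotation
lemma cyc_core {mm t o1 o2 o3 o4 v1 v2 v3 v4 : ℕ}
    (hm : t < mm)
    (ho : o1 < o2 ∧ o2 < o3 ∧ o3 < o4 ∧ o4 < mm)
    (h1 : (t + o1 < mm ∧ v1 = t + o1) ∨ (mm ≤ t + o1 ∧ v1 + mm = t + o1))
    (h2 : (t + o2 < mm ∧ v2 = t + o2) ∨ (mm ≤ t + o2 ∧ v2 + mm = t + o2))
    (h3 : (t + o3 < mm ∧ v3 = t + o3) ∨ (mm ≤ t + o3 ∧ v3 + mm = t + o3))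
    (h4 : (t + o4 < mm ∧ v4 = t + o4) ∨ (mm ≤ t + o4 ∧ v4 + mm = t + o4)) :
    CrN v1 v3 v2 v4 := by
  unfold CrN; omega

section SwapSec

variable {m : ℕ}

/-- crossing-pair set of a matching, combinatorial -/
def crF (m : ℕ) (f : Fin m → Fin m) : Finset (Fin m × Fin m) :=
  univ.filter fun q => q.1 < q.2 ∧ q.1 < f q.1 ∧ q.2 < f q.2 ∧
    CrN ↑q.1 ↑(f q.1) ↑q.2 ↑(f q.2)

lemma mem_crF {f : Fin m → Fin m} {q : Fin m × Fin m} :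
    q ∈ crF m f ↔ q.1 < q.2 ∧ q.1 < f q.1 ∧ q.2 < f q.2 ∧
      CrN ↑q.1 ↑(f q.1) ↑q.2 ↑(f q.2) := by
  simp [crF]

/-- the swapped matching -/
def gsw (f : Fin m → Fin m) (u w : Fin m) : Fin m → Fin m := fun i =>
  if i = u then f w else if i = f w then u else if i = f u then w
  else if i = w then f u else f i

variable {f : Fin m → Fin m} {u w : Fin m}

namespace SwapAux

-- distinctness
lemma duv (hfp : ∀ i, f i ≠ i) : u ≠ f u := fun h => (hfp u h.symm)
lemma dwz (hfp : ∀ i, f i ≠ i) : w ≠ f w := fun h => (hfp w h.symm)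
lemma dvw (hinv : Function.Involutive f) (huz : u ≠ f w) : f u ≠ w := by
  intro h; exact huz (by rw [← h, hinv u])
lemma dvz (hinv : Function.Involutive f) (huw : u ≠ w) : f u ≠ f w := fun h => huw (hinv.injective h)
lemma dwu (huw : u ≠ w) : w ≠ u := huw.symm
lemma dzv (hinv : Function.Involutive f) (huw : u ≠ w) : f w ≠ f u := (dvz hinv huw).symm

lemma gsw_u : gsw f u w u = f w := by simp [gsw]
lemma gsw_z (huz : u ≠ f w) : gsw f u w (f w) = u := by
  simp [gsw, (huz.symm : f w ≠ u)]
lemma gsw_v (hinv : Function.Involutive f) (hfp : ∀ i, f i ≠ i) (huw : u ≠ w) (huz : u ≠ f w) : gsw f u w (f u) = w := by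
  have h1 : f u ≠ u := (duv hfp).symm
  have h2 : f u ≠ f w := dvz hinv huw
  simp [gsw, h1, h2]
lemma gsw_w (hinv : Function.Involutive f) (hfp : ∀ i, f i ≠ i) (huw : u ≠ w) (huz : u ≠ f w) : gsw f u w w = f u := by
  have h1 : w ≠ u := huw.symm
  have h2 : w ≠ f w := dwz hfp
  have h3 : w ≠ f u := (dvw hinv huz).symm
  simp [gsw, h1, h2, h3]
lemma gsw_out {i : Fin m} (h1 : i ≠ u) (h2 : i ≠ f w) (h3 : i ≠ f u) (h4 : i ≠ w) :
    gsw f u w i = f i := by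
  simp [gsw, h1, h2, h3, h4]

lemma fi_out (hinv : Function.Involutive f) {i : Fin m} (h1 : i ≠ u) (h2 : i ≠ f w) (h3 : i ≠ f u) (h4 : i ≠ w) :
    f i ≠ u ∧ f i ≠ f w ∧ f i ≠ f u ∧ f i ≠ w := by
  refine ⟨fun h => h3 ?_, fun h => h4 (hinv.injective h), fun h => h1 (hinv.injective h),
    fun h => h2 ?_⟩
  · rw [← h, hinv i]
  · rw [← h, hinv i]

lemma gsw_invol (hinv : Function.Involutive f) (hfp : ∀ i, f i ≠ i) (huw : u ≠ w) (huz : u ≠ f w) : Function.Involutive (gsw f u w) := by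
  intro i
  by_cases h1 : i = u
  · rw [h1, gsw_u, gsw_z huz]
  by_cases h2 : i = f w
  · rw [h2, gsw_z huz, gsw_u]
  by_cases h3 : i = f u
  · rw [h3, gsw_v hinv hfp huw huz, gsw_w hinv hfp huw huz]
  by_cases h4 : i = w
  · rw [h4, gsw_w hinv hfp huw huz, gsw_v hinv hfp huw huz]
  · obtain ⟨g1, g2, g3, g4⟩ := fi_out hinv h1 h2 h3 h4
    rw [gsw_out h1 h2 h3 h4, gsw_out g1 g2 g3 g4, hinv i]

lemma gsw_fpf (hinv : Function.Involutive f) (hfp : ∀ i, f i ≠ i) (huw : u ≠ w) (huz : u ≠ f w) : ∀ i, gsw f u w i ≠ i := by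
  intro i
  by_cases h1 : i = u
  · rw [h1, gsw_u]; exact huz.symm
  by_cases h2 : i = f w
  · rw [h2, gsw_z huz]; exact huz
  by_cases h3 : i = f u
  · rw [h3, gsw_v hinv hfp huw huz]; exact dvw hinv huz ∘ Eq.symm
  by_cases h4 : i = w
  · rw [h4, gsw_w hinv hfp huw huz]; exact dvw hinv huz
  · rw [gsw_out h1 h2 h3 h4]; exact hfp i

lemma gsw_colors (hinv : Function.Involutive f) (hfp : ∀ i, f i ≠ i) (huw : u ≠ w) (huz : u ≠ f w) {c : Fin m → Bool} (hc : ∀ i, c (f i) ≠ c i) (hcuw : c u = c w) :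
    ∀ i, c (gsw f u w i) ≠ c i := by
  intro i
  by_cases h1 : i = u
  · rw [h1, gsw_u, hcuw]; exact hc w
  by_cases h2 : i = f w
  · rw [h2, gsw_z huz]
    have := hc w; rw [hcuw]; exact fun h => this h.symm
  by_cases h3 : i = f u
  · rw [h3, gsw_v hinv hfp huw huz, ← hcuw]
    have := hc u; exact fun h => this h.symm
  by_cases h4 : i = w
  · rw [h4, gsw_w hinv hfp huw huz, ← hcuw]
    exact hc u
  · rw [gsw_out h1 h2 h3 h4]; exact hc i

end SwapAux

end SwapSec

open SwapAux in
lemma crF_lt {f : Fin m → Fin m} {u w : Fin m}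
    (hinv : Function.Involutive f) (hfp : ∀ i, f i ≠ i)
    (huw : u ≠ w) (huz : u ≠ f w)
    (hcr : CrN ↑u ↑(f w) ↑(f u) ↑w) :
    (crF m f).card < (crF m (gsw f u w)).card := by
  classical
  set v := f u with hv
  set z := f w with hz
  set g := gsw f u w with hg
  -- basic facts about f on the four points
  have hfu : f u = v := rfl
  have hfv : f v = u := hinv u
  have hfw : f w = z := rfl
  have hfz : f z = w := hinv w
  -- distinctness
  have duv : u ≠ v := duv hfp
  have dwz : w ≠ z := dwz hfp
  have dvw : v ≠ w := dvw hinv huz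
  have dvz : v ≠ z := dvz hinv huw
  have duz : u ≠ z := huz
  have vne : ∀ {x y : Fin m}, x ≠ y → (↑x : ℕ) ≠ ↑y := fun h => Fin.val_ne_iff.mpr h
  -- g on the four points
  have gu : g u = z := gsw_u
  have gz : g z = u := gsw_z huz
  have gv : g v = w := gsw_v hinv hfp huw huz
  have gw : g w = v := gsw_w hinv hfp huw huz
  -- edge representatives
  obtain ⟨eC, pC⟩ : ∃ e : Fin m, (e = u ∧ f e = v ∧ u < v) ∨ (e = v ∧ f e = u ∧ v < u) := by
    rcases lt_or_gt_of_ne duv with h | h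
    · exact ⟨u, Or.inl ⟨rfl, hfu, h⟩⟩
    · exact ⟨v, Or.inr ⟨rfl, hfv, h⟩⟩
  obtain ⟨eD, pD⟩ : ∃ e : Fin m, (e = w ∧ f e = z ∧ w < z) ∨ (e = z ∧ f e = w ∧ z < w) := by
    rcases lt_or_gt_of_ne dwz with h | h
    · exact ⟨w, Or.inl ⟨rfl, hfw, h⟩⟩
    · exact ⟨z, Or.inr ⟨rfl, hfz, h⟩⟩
  obtain ⟨eA, pA⟩ : ∃ e : Fin m, (e = u ∧ g e = z ∧ u < z) ∨ (e = z ∧ g e = u ∧ z < u) := by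
    rcases lt_or_gt_of_ne duz with h | h
    · exact ⟨u, Or.inl ⟨rfl, gu, h⟩⟩
    · exact ⟨z, Or.inr ⟨rfl, gz, h⟩⟩
  obtain ⟨eB, pB⟩ : ∃ e : Fin m, (e = v ∧ g e = w ∧ v < w) ∨ (e = w ∧ g e = v ∧ w < v) := by
    rcases lt_or_gt_of_ne dvw with h | h
    · exact ⟨v, Or.inl ⟨rfl, gv, h⟩⟩
    · exact ⟨w, Or.inr ⟨rfl, gw, h⟩⟩
  have repC : eC < f eC := by rcases pC with ⟨h1, h2, h3⟩ | ⟨h1, h2, h3⟩ <;> rw [h2, h1] <;> exact h3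
  have repD : eD < f eD := by rcases pD with ⟨h1, h2, h3⟩ | ⟨h1, h2, h3⟩ <;> rw [h2, h1] <;> exact h3
  have repA : eA < g eA := by rcases pA with ⟨h1, h2, h3⟩ | ⟨h1, h2, h3⟩ <;> rw [h2, h1] <;> exact h3
  have repB : eB < g eB := by rcases pB with ⟨h1, h2, h3⟩ | ⟨h1, h2, h3⟩ <;> rw [h2, h1] <;> exact h3
  -- val-level distinctness
  have nuv := vne duv
  have nuw := vne huw
  have nuz := vne duz
  have nvw := vne dvw
  have nvz := vne dvz
  have nwz := vne dwz
  have hold : ¬ CrN ↑u ↑v ↑w ↑z := CrN_unique nuv nuw nuz nvw nvz nwz hcr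
  have dCD : eC ≠ eD := by
    rcases pC with ⟨h1, _, _⟩ | ⟨h1, _, _⟩ <;> rcases pD with ⟨h2, _, _⟩ | ⟨h2, _, _⟩ <;>
      rw [h1, h2] <;> first | exact huw | exact duz | exact dvw | exact dvz
  have dAB : eA ≠ eB := by
    rcases pA with ⟨h1, _, _⟩ | ⟨h1, _, _⟩ <;> rcases pB with ⟨h2, _, _⟩ | ⟨h2, _, _⟩ <;>
      rw [h1, h2] <;>
      first | exact duv | exact huw | exact dvz.symm | exact dwz.symm
  have eAuvwz : (eA = u ∨ eA = v ∨ eA = w ∨ eA = z) := by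
    rcases pA with ⟨h1, _, _⟩ | ⟨h1, _, _⟩
    · exact Or.inl h1
    · exact Or.inr (Or.inr (Or.inr h1))
  have eBuvwz : (eB = u ∨ eB = v ∨ eB = w ∨ eB = z) := by
    rcases pB with ⟨h1, _, _⟩ | ⟨h1, _, _⟩
    · exact Or.inr (Or.inl h1)
    · exact Or.inr (Or.inr (Or.inl h1))
  -- val-level descriptions of the edges
  have vpC : ((↑eC : ℕ) = ↑u ∧ (↑(f eC) : ℕ) = ↑v) ∨ ((↑eC : ℕ) = ↑v ∧ (↑(f eC) : ℕ) = ↑u) := by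
    rcases pC with ⟨h1, h2, _⟩ | ⟨h1, h2, _⟩
    · exact Or.inl ⟨by rw [h1], by rw [h2]⟩
    · exact Or.inr ⟨by rw [h1], by rw [h2]⟩
  have vpD : ((↑eD : ℕ) = ↑w ∧ (↑(f eD) : ℕ) = ↑z) ∨ ((↑eD : ℕ) = ↑z ∧ (↑(f eD) : ℕ) = ↑w) := by
    rcases pD with ⟨h1, h2, _⟩ | ⟨h1, h2, _⟩
    · exact Or.inl ⟨by rw [h1], by rw [h2]⟩
    · exact Or.inr ⟨by rw [h1], by rw [h2]⟩
  have vpA : ((↑eA : ℕ) = ↑u ∧ (↑(g eA) : ℕ) = ↑z) ∨ ((↑eA : ℕ) = ↑z ∧ (↑(g eA) : ℕ) = ↑u) := by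
    rcases pA with ⟨h1, h2, _⟩ | ⟨h1, h2, _⟩
    · exact Or.inl ⟨by rw [h1], by rw [h2]⟩
    · exact Or.inr ⟨by rw [h1], by rw [h2]⟩
  have vpB : ((↑eB : ℕ) = ↑v ∧ (↑(g eB) : ℕ) = ↑w) ∨ ((↑eB : ℕ) = ↑w ∧ (↑(g eB) : ℕ) = ↑v) := by
    rcases pB with ⟨h1, h2, _⟩ | ⟨h1, h2, _⟩
    · exact Or.inl ⟨by rw [h1], by rw [h2]⟩
    · exact Or.inr ⟨by rw [h1], by rw [h2]⟩
  -- outside lemma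
  have outLem : ∀ i : Fin m, i < f i → i ≠ eC → i ≠ eD → i ≠ u ∧ i ≠ v ∧ i ≠ w ∧ i ≠ z := by
    intro i hi hC hD
    refine ⟨?_, ?_, ?_, ?_⟩ <;> intro h
    · rcases pC with ⟨h1, _, _⟩ | ⟨h1, _, h3⟩
      · exact hC (h.trans h1.symm)
      · rw [h, hfu] at hi; exact absurd hi (lt_asymm h3)
    · rcases pC with ⟨h1, _, h3⟩ | ⟨h1, _, _⟩
      · rw [h, hfv] at hi; exact absurd hi (lt_asymm h3)
      · exact hC (h.trans h1.symm)
    · rcases pD with ⟨h1, _, _⟩ | ⟨h1, _, h3⟩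
      · exact hD (h.trans h1.symm)
      · rw [h, hfw] at hi; exact absurd hi (lt_asymm h3)
    · rcases pD with ⟨h1, _, h3⟩ | ⟨h1, _, _⟩
      · rw [h, hfz] at hi; exact absurd hi (lt_asymm h3)
      · exact hD (h.trans h1.symm)
  have fh_out : ∀ i : Fin m, i ≠ u → i ≠ v → i ≠ w → i ≠ z →
      g i = f i ∧ f i ≠ u ∧ f i ≠ v ∧ f i ≠ w ∧ f i ≠ z := by
    intro i h1 h2 h3 h4
    obtain ⟨k1, k2, k3, k4⟩ := fi_out hinv (u := u) (w := w) h1 h4 h2 h3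
    exact ⟨gsw_out h1 h4 h2 h3, k1, k3, k4, k2⟩
  -- distinctness of the 4 points of a matched crossing pair
  have dis4 : ∀ q : Fin m × Fin m, q ∈ crF m f →
      q.1 ≠ f q.1 ∧ q.2 ≠ f q.2 ∧ q.1 ≠ q.2 ∧ q.1 ≠ f q.2 ∧ f q.1 ≠ q.2 ∧ f q.1 ≠ f q.2 := by
    intro q hq
    obtain ⟨hlt, h1, h2, _⟩ := mem_crF.mp hq
    refine ⟨ne_of_lt h1, ne_of_lt h2, ne_of_lt hlt, ?_, ?_, ?_⟩
    · intro h; rw [← h] at h2; exact absurd (h2.trans hlt) (lt_irrefl _)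
    · intro h; have hh : f q.2 = q.1 := by rw [← h, hinv]
      rw [hh] at h2; exact absurd (h2.trans hlt) (lt_irrefl _)
    · intro h; exact (ne_of_lt hlt) (hinv.injective h)
  have memsym : ∀ q : Fin m × Fin m, q ∈ crF m f →
      CrN ↑q.2 ↑(f q.2) ↑q.1 ↑(f q.1) := by
    intro q hq
    obtain ⟨d1, d2, d3, d4, d5, d6⟩ := dis4 q hq
    obtain ⟨_, _, _, hcrq⟩ := mem_crF.mp hq
    exact (CrN_comm (vne d1) (vne d2) (vne d3) (vne d4) (vne d5) (vne d6)).mp hcrq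
  -- the maps
  set msort : Fin m → Fin m → Fin m × Fin m := fun x y => if x < y then (x, y) else (y, x)
    with hmsort
  set ψ : Fin m → Fin m → Fin m := fun hh r =>
    if r = eC then (if CrN ↑hh ↑(f hh) ↑u ↑z then eA else eB)
    else (if CrN ↑hh ↑(f hh) ↑v ↑w then eB else eA) with hψ
  set φ : Fin m × Fin m → Fin m × Fin m := fun q =>
    if q.1 = eC ∨ q.1 = eD then msort (ψ q.2 q.1) q.2
    else if q.2 = eC ∨ q.2 = eD then msort q.1 (ψ q.1 q.2) else q with hφ
  have msort_cases : ∀ x y : Fin m, msort x y = (x, y) ∨ msort x y = (y, x) := by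
    intro x y; rw [hmsort]; dsimp only; split <;> [exact Or.inl rfl; exact Or.inr rfl]
  -- no pair of crF f has both components special
  have nboth : ∀ q : Fin m × Fin m, q ∈ crF m f →
      ¬((q.1 = eC ∨ q.1 = eD) ∧ (q.2 = eC ∨ q.2 = eD)) := by
    rintro q hq ⟨hq1, hq2⟩
    obtain ⟨hlt, h1, h2, hcrq⟩ := mem_crF.mp hq
    rcases hq1 with e1 | e1 <;> rcases hq2 with e2 | e2
    · exact (ne_of_lt hlt) (e1.trans e2.symm)
    · apply hold
      rw [e1, e2] at hcrq
      exact (CrN_congr vpC vpD).mp hcrq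
    · apply hold
      have := memsym q hq
      rw [e1, e2] at this
      exact (CrN_congr vpC vpD).mp this
    · exact (ne_of_lt hlt) (e1.trans e2.symm)
  -- the special pair of crF g
  obtain ⟨P0, hP0mem, hP0S⟩ : ∃ P0 : Fin m × Fin m, P0 ∈ crF m g ∧
      ((P0.1 = eA ∨ P0.1 = eB) ∧ (P0.2 = eA ∨ P0.2 = eB)) := by
    have crAB : CrN ↑eA ↑(g eA) ↑eB ↑(g eB) := (CrN_congr vpA vpB).mpr hcr
    rcases lt_or_gt_of_ne dAB with hlt | hlt
    · exact ⟨(eA, eB), mem_crF.mpr ⟨hlt, repA, repB, crAB⟩, Or.inl rfl, Or.inr rfl⟩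
    · refine ⟨(eB, eA), mem_crF.mpr ⟨hlt, repB, repA, ?_⟩, Or.inr rfl, Or.inl rfl⟩
      have d1 : (↑eA : ℕ) ≠ ↑(g eA) := vne (ne_of_lt repA)
      have d2 : (↑eB : ℕ) ≠ ↑(g eB) := vne (ne_of_lt repB)
      have d3 : (↑eA : ℕ) ≠ ↑eB := vne dAB
      have d4 : (↑eA : ℕ) ≠ ↑(g eB) := by
        rcases vpA with ⟨x1, _⟩ | ⟨x1, _⟩ <;> rcases vpB with ⟨_, y2⟩ | ⟨_, y2⟩ <;>
          rw [x1, y2] <;> first | exact nuw | exact nuv | exact nwz.symm | exact nvz.symm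
      have d5 : (↑(g eA) : ℕ) ≠ ↑eB := by
        rcases vpA with ⟨_, x2⟩ | ⟨_, x2⟩ <;> rcases vpB with ⟨y1, _⟩ | ⟨y1, _⟩ <;>
          rw [x2, y1] <;> first | exact nvz.symm | exact nwz.symm | exact nuv | exact nuw
      have d6 : (↑(g eA) : ℕ) ≠ ↑(g eB) := by
        rcases vpA with ⟨_, x2⟩ | ⟨_, x2⟩ <;> rcases vpB with ⟨_, y2⟩ | ⟨_, y2⟩ <;>
          rw [x2, y2] <;> first | exact nwz.symm | exact nvz.symm | exact nuw | exact nuv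
      exact (CrN_comm d1 d2 d3 d4 d5 d6).mp crAB
  have psiAB : ∀ hh x : Fin m, ψ hh x = eA ∨ ψ hh x = eB := by
    intro hh x
    rw [hψ]; dsimp only
    split
    · split
      · exact Or.inl rfl
      · exact Or.inr rfl
    · split
      · exact Or.inr rfl
      · exact Or.inl rfl
  have msort_cases : ∀ x y : Fin m, (x < y ∧ msort x y = (x, y)) ∨ (y ≤ x ∧ msort x y = (y, x)) := by
    intro x y; rw [hmsort]; dsimp only
    split
    · exact Or.inl ⟨by assumption, rfl⟩
    · exact Or.inr ⟨le_of_not_gt (by assumption), rfl⟩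
  have msort_comm : ∀ x y : Fin m, x ≠ y → msort x y = msort y x := by
    intro x y hxy; rw [hmsort]; dsimp only
    rcases lt_or_gt_of_ne hxy with h | h
    · rw [if_pos h, if_neg (lt_asymm h)]
    · rw [if_neg (lt_asymm h), if_pos h]
  -- ψ analysis for a special edge crossed by an outside edge
  have specPsi : ∀ x hh : Fin m, (x = eC ∨ x = eD) → hh < f hh →
      hh ≠ u → hh ≠ v → hh ≠ w → hh ≠ z →
      CrN ↑hh ↑(f hh) ↑x ↑(f x) →
      ((ψ hh x = eA ∧ CrN ↑hh ↑(f hh) ↑u ↑z) ∨ (ψ hh x = eB ∧ CrN ↑hh ↑(f hh) ↑v ↑w)) := by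
    intro x hh hx hhh h1 h2 h3 h4 hsep
    obtain ⟨go, fo1, fo2, fo3, fo4⟩ := fh_out hh h1 h2 h3 h4
    have hs : (↑hh : ℕ) ≠ ↑(f hh) := vne (ne_of_lt hhh)
    have d1 := vne h1; have d2 := vne h2; have d3 := vne h3; have d4 := vne h4
    have e1 := vne fo1; have e2 := vne fo2; have e3 := vne fo3; have e4 := vne fo4
    rcases hx with hxC | hxD
    · have QC : CrN ↑hh ↑(f hh) ↑u ↑v := by
        rw [hxC] at hsep
        exact (CrN_congr (Or.inl ⟨rfl, rfl⟩) vpC).mp hsep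
      by_cases hA : CrN ↑hh ↑(f hh) ↑u ↑z
      · exact Or.inl ⟨by simp [hψ, hxC, hA], hA⟩
      · rcases key1 hs d1 d2 d3 d4 e1 e2 e3 e4 nuv nuw nuz nvw nvz nwz hcr (Or.inl QC) with
          hA' | hB
        · exact absurd hA' hA
        · exact Or.inr ⟨by simp [hψ, hxC, hA], hB⟩
    · have hxC : x ≠ eC := by rw [hxD]; exact Ne.symm dCD
      have QD : CrN ↑hh ↑(f hh) ↑w ↑z := by
        rw [hxD] at hsep
        exact (CrN_congr (Or.inl ⟨rfl, rfl⟩) vpD).mp hsep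
      by_cases hB : CrN ↑hh ↑(f hh) ↑v ↑w
      · exact Or.inr ⟨by simp [hψ, hxC, hB], hB⟩
      · rcases key1 hs d1 d2 d3 d4 e1 e2 e3 e4 nuv nuw nuz nvw nvz nwz hcr (Or.inr QD) with
          hA | hB'
        · exact Or.inl ⟨by simp [hψ, hxC, hB], hA⟩
        · exact absurd hB' hB
  -- membership of the reassigned pair
  have targetmem : ∀ r hh : Fin m, hh < f hh →
      hh ≠ u → hh ≠ v → hh ≠ w → hh ≠ z →
      ((r = eA ∧ CrN ↑hh ↑(f hh) ↑u ↑z) ∨ (r = eB ∧ CrN ↑hh ↑(f hh) ↑v ↑w)) →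
      msort r hh ∈ (crF m g).erase P0 := by
    intro r hh hhh h1 h2 h3 h4 hcrr
    obtain ⟨go, fo1, fo2, fo3, fo4⟩ := fh_out hh h1 h2 h3 h4
    have hs : (↑hh : ℕ) ≠ ↑(f hh) := vne (ne_of_lt hhh)
    have hrAB : r = eA ∨ r = eB := by
      rcases hcrr with ⟨h, _⟩ | ⟨h, _⟩; exacts [Or.inl h, Or.inr h]
    have hrg : r < g r := by
      rcases hrAB with h | h <;> rw [h]; exacts [repA, repB]
    have hruv : r = u ∨ r = v ∨ r = w ∨ r = z := by
      rcases hrAB with h | h <;> rw [h]; exacts [eAuvwz, eBuvwz]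
    have hrh : r ≠ hh := by
      rcases hruv with h | h | h | h <;> rw [h]
      exacts [Ne.symm h1, Ne.symm h2, Ne.symm h3, Ne.symm h4]
    have crval2 : CrN ↑hh ↑(g hh) ↑r ↑(g r) := by
      rw [go]
      rcases hcrr with ⟨hre, hA⟩ | ⟨hre, hB⟩
      · rw [hre]; exact (CrN_congr (Or.inl ⟨rfl, rfl⟩) vpA).mpr hA
      · rw [hre]; exact (CrN_congr (Or.inl ⟨rfl, rfl⟩) vpB).mpr hB
    have crval1 : CrN ↑r ↑(g r) ↑hh ↑(g hh) := by
      rw [go]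
      rcases hcrr with ⟨hre, hA⟩ | ⟨hre, hB⟩
      · have c1 := (CrN_comm hs nuz (vne h1) (vne h4) (vne fo1) (vne fo4)).mp hA
        rw [hre]; exact (CrN_congr vpA (Or.inl ⟨rfl, rfl⟩)).mpr c1
      · have c1 := (CrN_comm hs nvw (vne h2) (vne h3) (vne fo2) (vne fo3)).mp hB
        rw [hre]; exact (CrN_congr vpB (Or.inl ⟨rfl, rfl⟩)).mpr c1
    have hne : msort r hh ≠ P0 := by
      intro hPe
      rcases msort_cases r hh with ⟨_, he⟩ | ⟨_, he⟩ <;> rw [he] at hPe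
      · have h2' : hh = P0.2 := congrArg Prod.snd hPe
        rcases hP0S.2 with hP | hP
        · rw [hP] at h2'
          rcases eAuvwz with h | h | h | h <;> rw [h] at h2'
          exacts [h1 h2', h2 h2', h3 h2', h4 h2']
        · rw [hP] at h2'
          rcases eBuvwz with h | h | h | h <;> rw [h] at h2'
          exacts [h1 h2', h2 h2', h3 h2', h4 h2']
      · have h2' : hh = P0.1 := congrArg Prod.fst hPe
        rcases hP0S.1 with hP | hP
        · rw [hP] at h2'
          rcases eAuvwz with h | h | h | h <;> rw [h] at h2'
          exacts [h1 h2', h2 h2', h3 h2', h4 h2']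
        · rw [hP] at h2'
          rcases eBuvwz with h | h | h | h <;> rw [h] at h2'
          exacts [h1 h2', h2 h2', h3 h2', h4 h2']
    refine Finset.mem_erase.mpr ⟨hne, ?_⟩
    rcases msort_cases r hh with ⟨ho, he⟩ | ⟨ho, he⟩ <;> rw [he, mem_crF]
    · exact ⟨ho, hrg, by rw [go]; exact hhh, crval1⟩
    · exact ⟨lt_of_le_of_ne ho (Ne.symm hrh), by rw [go]; exact hhh, hrg, crval2⟩
  -- classification of pairs of crF f under φ
  have classify : ∀ q : Fin m × Fin m, q ∈ crF m f →
      (φ q = q ∧ (q.1 ≠ u ∧ q.1 ≠ v ∧ q.1 ≠ w ∧ q.1 ≠ z) ∧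
        (q.2 ≠ u ∧ q.2 ≠ v ∧ q.2 ≠ w ∧ q.2 ≠ z)) ∨
      (∃ x hh : Fin m, (x = eC ∨ x = eD) ∧ (hh ≠ u ∧ hh ≠ v ∧ hh ≠ w ∧ hh ≠ z) ∧
        hh < f hh ∧ (q = (x, hh) ∨ q = (hh, x)) ∧ φ q = msort (ψ hh x) hh ∧
        CrN ↑hh ↑(f hh) ↑x ↑(f x)) := by
    intro q hq
    obtain ⟨hlt, hr1, hr2, hcrq⟩ := mem_crF.mp hq
    by_cases s1 : q.1 = eC ∨ q.1 = eD
    · have s2 : ¬(q.2 = eC ∨ q.2 = eD) := fun h => nboth q hq ⟨s1, h⟩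
      push_neg at s2
      obtain ⟨o1, o2, o3, o4⟩ := outLem q.2 hr2 s2.1 s2.2
      refine Or.inr ⟨q.1, q.2, s1, ⟨o1, o2, o3, o4⟩, hr2, Or.inl rfl, ?_, memsym q hq⟩
      rw [hφ]; dsimp only; rw [if_pos s1]
    · by_cases s2 : q.2 = eC ∨ q.2 = eD
      · have s1' := s1; push_neg at s1'
        obtain ⟨o1, o2, o3, o4⟩ := outLem q.1 hr1 s1'.1 s1'.2
        refine Or.inr ⟨q.2, q.1, s2, ⟨o1, o2, o3, o4⟩, hr1, Or.inr rfl, ?_, hcrq⟩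
        have hps : q.1 ≠ ψ q.1 q.2 := by
          rcases psiAB q.1 q.2 with h | h <;> rw [h] <;> intro hcon
          · rcases eAuvwz with h' | h' | h' | h' <;> rw [h'] at hcon
            exacts [o1 hcon, o2 hcon, o3 hcon, o4 hcon]
          · rcases eBuvwz with h' | h' | h' | h' <;> rw [h'] at hcon
            exacts [o1 hcon, o2 hcon, o3 hcon, o4 hcon]
        rw [hφ]; dsimp only; rw [if_neg s1, if_pos s2]
        exact msort_comm q.1 (ψ q.1 q.2) hps
      · have s1' := s1; push_neg at s1'
        have s2' := s2; push_neg at s2'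
        obtain ⟨o1, o2, o3, o4⟩ := outLem q.1 hr1 s1'.1 s1'.2
        obtain ⟨p1, p2, p3, p4⟩ := outLem q.2 hr2 s2'.1 s2'.2
        refine Or.inl ⟨?_, ⟨o1, o2, o3, o4⟩, ⟨p1, p2, p3, p4⟩⟩
        rw [hφ]; dsimp only; rw [if_neg s1, if_neg s2]
  -- φ maps into the erase
  have himg : ∀ q ∈ crF m f, φ q ∈ (crF m g).erase P0 := by
    intro q hq
    obtain ⟨hlt, hr1, hr2, hcrq⟩ := mem_crF.mp hq
    rcases classify q hq with ⟨hid, ⟨o1, o2, o3, o4⟩, ⟨p1, p2, p3, p4⟩⟩ |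
      ⟨x, hh, hx, ⟨h1, h2, h3, h4⟩, hhh, _, hphi, hsep⟩
    · obtain ⟨go1, _, _, _, _⟩ := fh_out q.1 o1 o2 o3 o4
      obtain ⟨go2, _, _, _, _⟩ := fh_out q.2 p1 p2 p3 p4
      rw [hid]
      refine Finset.mem_erase.mpr ⟨?_, mem_crF.mpr ⟨hlt, by rw [go1]; exact hr1,
        by rw [go2]; exact hr2, by rw [go1, go2]; exact hcrq⟩⟩
      intro he
      have h1' : q.1 = P0.1 := congrArg Prod.fst he
      rcases hP0S.1 with hP | hP
      · rw [hP] at h1'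
        rcases eAuvwz with h | h | h | h <;> rw [h] at h1'
        exacts [o1 h1', o2 h1', o3 h1', o4 h1']
      · rw [hP] at h1'
        rcases eBuvwz with h | h | h | h <;> rw [h] at h1'
        exacts [o1 h1', o2 h1', o3 h1', o4 h1']
    · rw [hphi]
      exact targetmem (ψ hh x) hh hhh h1 h2 h3 h4 (specPsi x hh hx hhh h1 h2 h3 h4 hsep)
  -- injectivity
  have hinj : Set.InjOn φ (crF m f) := by
    intro q hq' q' hq'' heq
    have hq : q ∈ crF m f := hq'
    have hq2 : q' ∈ crF m f := hq''
    obtain ⟨hlt, _, _, _⟩ := mem_crF.mp hq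
    obtain ⟨hlt2, _, _, _⟩ := mem_crF.mp hq2
    have notuvwz : ∀ (y : Fin m), y ≠ u → y ≠ v → y ≠ w → y ≠ z →
        ∀ x : Fin m, (x = eA ∨ x = eB) → y ≠ x := by
      intro y y1 y2 y3 y4 x hx hee
      rcases hx with h | h <;> rw [h] at hee
      · rcases eAuvwz with h' | h' | h' | h' <;> rw [h'] at hee
        exacts [y1 hee, y2 hee, y3 hee, y4 hee]
      · rcases eBuvwz with h' | h' | h' | h' <;> rw [h'] at hee
        exacts [y1 hee, y2 hee, y3 hee, y4 hee]
    rcases classify q hq with ⟨hid, ⟨o1, o2, o3, o4⟩, ⟨p1, p2, p3, p4⟩⟩ |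
      ⟨x, hh, hx, ⟨h1, h2, h3, h4⟩, hhh, hqe, hphi, hsep⟩
    · rcases classify q' hq2 with ⟨hid2, _, _⟩ |
        ⟨x2, hh2, hx2, ⟨k1, k2, k3, k4⟩, hhh2, hqe2, hphi2, hsep2⟩
      · rw [hid, hid2] at heq; exact heq
      · exfalso
        rw [hid, hphi2] at heq
        rcases msort_cases (ψ hh2 x2) hh2 with ⟨_, he⟩ | ⟨_, he⟩ <;> rw [he] at heq
        · exact notuvwz q.1 o1 o2 o3 o4 (ψ hh2 x2) (psiAB hh2 x2) (congrArg Prod.fst heq)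
        · exact notuvwz q.2 p1 p2 p3 p4 (ψ hh2 x2) (psiAB hh2 x2) (congrArg Prod.snd heq)
    · rcases classify q' hq2 with ⟨hid2, ⟨o1, o2, o3, o4⟩, ⟨p1, p2, p3, p4⟩⟩ |
        ⟨x2, hh2, hx2, ⟨k1, k2, k3, k4⟩, hhh2, hqe2, hphi2, hsep2⟩
      · exfalso
        rw [hid2, hphi] at heq
        rcases msort_cases (ψ hh x) hh with ⟨_, he⟩ | ⟨_, he⟩ <;> rw [he] at heq
        · exact notuvwz q'.1 o1 o2 o3 o4 (ψ hh x) (psiAB hh x) (congrArg Prod.fst heq).symm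
        · exact notuvwz q'.2 p1 p2 p3 p4 (ψ hh x) (psiAB hh x) (congrArg Prod.snd heq).symm
      · -- both special
        rw [hphi, hphi2] at heq
        -- extract component equalities
        have hcomp : ψ hh x = ψ hh2 x2 ∧ hh = hh2 := by
          rcases msort_cases (ψ hh x) hh with ⟨_, he⟩ | ⟨_, he⟩ <;>
            rcases msort_cases (ψ hh2 x2) hh2 with ⟨_, he2⟩ | ⟨_, he2⟩ <;>
            rw [he, he2] at heq
          · exact ⟨congrArg Prod.fst heq, congrArg Prod.snd heq⟩
          · exact absurd (congrArg Prod.snd heq)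
              (notuvwz hh h1 h2 h3 h4 (ψ hh2 x2) (psiAB hh2 x2))
          · exact absurd (congrArg Prod.fst heq)
              (notuvwz hh h1 h2 h3 h4 (ψ hh2 x2) (psiAB hh2 x2))
          · exact ⟨congrArg Prod.snd heq, congrArg Prod.fst heq⟩
        obtain ⟨hreq, hheq⟩ := hcomp
        rw [← hheq] at hreq hsep2
        -- same special point
        have hxx : x = x2 := by
          by_contra hxx
          have hCD : (x = eC ∧ x2 = eD) ∨ (x = eD ∧ x2 = eC) := by
            rcases hx with h | h <;> rcases hx2 with h' | h'
            · exact absurd (h.trans h'.symm) hxx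
            · exact Or.inl ⟨h, h'⟩
            · exact Or.inr ⟨h, h'⟩
            · exact absurd (h.trans h'.symm) hxx
          -- derive both QC and QD for the same hh
          obtain ⟨go, fo1, fo2, fo3, fo4⟩ := fh_out hh h1 h2 h3 h4
          have hs : (↑hh : ℕ) ≠ ↑(f hh) := vne (ne_of_lt hhh)
          have QC : CrN ↑hh ↑(f hh) ↑u ↑v := by
            rcases hCD with ⟨hA, hB⟩ | ⟨hA, hB⟩
            · rw [hA] at hsep; exact (CrN_congr (Or.inl ⟨rfl, rfl⟩) vpC).mp hsep
            · rw [hB] at hsep2; exact (CrN_congr (Or.inl ⟨rfl, rfl⟩) vpC).mp hsep2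
          have QD : CrN ↑hh ↑(f hh) ↑w ↑z := by
            rcases hCD with ⟨hA, hB⟩ | ⟨hA, hB⟩
            · rw [hB] at hsep2; exact (CrN_congr (Or.inl ⟨rfl, rfl⟩) vpD).mp hsep2
            · rw [hA] at hsep; exact (CrN_congr (Or.inl ⟨rfl, rfl⟩) vpD).mp hsep
          obtain ⟨cA, cB⟩ := key2 hs (vne h1) (vne h2) (vne h3) (vne h4)
            (vne fo1) (vne fo2) (vne fo3) (vne fo4)
            nuv nuw nuz nvw nvz nwz hcr QC QD
          have eq1 : ψ hh eC = eA := by simp [hψ, cA]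
          have eq2 : ψ hh eD = eB := by simp [hψ, Ne.symm dCD, cB]
          apply dAB
          rcases hCD with ⟨hA, hB⟩ | ⟨hA, hB⟩
          · rw [← eq1, ← hA, ← eq2, ← hB]; exact hreq
          · rw [← eq2, ← hA, ← eq1, ← hB]; exact hreq.symm
        -- conclude q = q'
        rcases hqe with he | he <;> rcases hqe2 with he2 | he2
        · rw [he, he2, hxx, hheq]
        · exfalso
          rw [he] at hlt; rw [he2] at hlt2
          dsimp only at hlt hlt2
          rw [hxx, hheq] at hlt
          exact absurd (hlt.trans hlt2) (lt_irrefl _)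
        · exfalso
          rw [he] at hlt; rw [he2] at hlt2
          dsimp only at hlt hlt2
          rw [hxx, hheq] at hlt
          exact absurd (hlt2.trans hlt) (lt_irrefl _)
        · rw [he, he2, hxx, hheq]
  calc (crF m f).card ≤ ((crF m g).erase P0).card :=
        Finset.card_le_card_of_injOn φ himg hinj
    _ < (crF m g).card := Finset.card_erase_lt_of_mem hP0mem


lemma crNum_eq_crF {m : ℕ} {p : Fin m → ℝ × ℝ} (hconv : ConvexCW m p)
    {f : Fin m → Fin m} (hinv : Function.Involutive f) :
    crNum m p f = (crF m f).card := by
  classical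
  have hiff : ∀ q : Fin m × Fin m,
      (q.1 < q.2 ∧ q.1 < f q.1 ∧ q.2 < f q.2 ∧
        SegCross (p q.1) (p (f q.1)) (p q.2) (p (f q.2))) ↔
      (q.1 < q.2 ∧ q.1 < f q.1 ∧ q.2 < f q.2 ∧
        CrN ↑q.1 ↑(f q.1) ↑q.2 ↑(f q.2)) := by
    intro q
    constructor <;> rintro ⟨h0, h1, h2, h3⟩ <;> refine ⟨h0, h1, h2, ?_⟩
    all_goals {
      have d1 : q.1 ≠ f q.1 := ne_of_lt h1
      have d2 : q.2 ≠ f q.2 := ne_of_lt h2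
      have d3 : q.1 ≠ q.2 := ne_of_lt h0
      have d4 : q.1 ≠ f q.2 := by
        intro h; rw [← h] at h2; exact absurd (h2.trans h0) (lt_irrefl _)
      have d5 : f q.1 ≠ q.2 := by
        intro h; have hh : f q.2 = q.1 := by rw [← h, hinv]
        rw [hh] at h2; exact absurd (h2.trans h0) (lt_irrefl _)
      have d6 : f q.1 ≠ f q.2 := fun h => (ne_of_lt h0) (hinv.injective h)
      first
      | exact (crIff hconv d1 d2 d3 d4 d5 d6).mp h3
      | exact (crIff hconv d1 d2 d3 d4 d5 d6).mpr h3 }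
  unfold crNum crF
  rw [Nat.card_eq_fintype_card, Fintype.card_subtype]
  apply Finset.card_bij (fun q _ => q)
  · intro q hq
    simp only [Finset.mem_filter, Finset.mem_univ, true_and] at *
    exact (hiff q).mp hq
  · intro q q' _ _ h; exact h
  · intro q hq
    refine ⟨q, ?_, rfl⟩
    simp only [Finset.mem_filter, Finset.mem_univ, true_and] at *
    exact (hiff q).mpr hq

open SwapAux in
lemma swap_rule {m : ℕ} {p : Fin m → ℝ × ℝ} {c : Fin m → Bool} {f : Fin m → Fin m}
    (hconv : ConvexCW m p) (hM : IsBPM m c f)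
    (hmax : ∀ g : Fin m → Fin m, IsBPM m c g → crNum m p g ≤ crNum m p f)
    {u w : Fin m} (hcuw : c u = c w) (huw : u ≠ w) (huz : u ≠ f w) :
    ¬ CrN ↑u ↑(f w) ↑(f u) ↑w := by
  intro hcr
  obtain ⟨hinv, hfp, hc⟩ := hM
  have h1 := crF_lt hinv hfp huw huz hcr
  have hgM : IsBPM m c (gsw f u w) :=
    ⟨gsw_invol hinv hfp huw huz, gsw_fpf hinv hfp huw huz, gsw_colors hinv hfp huw huz hc hcuw⟩
  have h2 := hmax _ hgM
  rw [crNum_eq_crF hconv hinv, crNum_eq_crF hconv (gsw_invol hinv hfp huw huz)] at h2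
  omega

lemma cardIco {M A B : ℕ} (hB : B ≤ M) :
    ((univ : Finset (Fin M)).filter fun y : Fin M => A ≤ (y : ℕ) ∧ (y : ℕ) < B).card = B - A := by
  rw [← Finset.card_range (B - A)]
  refine Finset.card_bij' (fun y _ => (y : ℕ) - A)
    (fun k hk => (⟨A + k, by simp only [Finset.mem_range] at hk; omega⟩ : Fin M))
    ?_ ?_ ?_ ?_
  case refine_1 =>
    intro y hy
    simp only [Finset.mem_filter] at hy
    simp only [Finset.mem_range]; omega
  case refine_2 =>
    intro k hk
    simp only [Finset.mem_range] at hk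
    simp only [Finset.mem_filter, Finset.mem_univ, true_and]; omega
  case refine_3 =>
    intro y hy
    simp only [Finset.mem_filter, Finset.mem_univ, true_and] at hy
    apply Fin.ext; simp only []; omega
  case refine_4 =>
    intro k hk
    simp only [Finset.mem_range] at hk
    simp only []; omega

lemma downset_char {M : ℕ} (S : Finset (Fin M)) (A B : ℕ) (hB : B ≤ M)
    (hsub : ∀ x ∈ S, A ≤ (x : ℕ) ∧ (x : ℕ) < B)
    (hdc : ∀ x ∈ S, ∀ y : Fin M, A ≤ (y : ℕ) → (y : ℕ) < (x : ℕ) → y ∈ S) :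
    ∀ j : Fin M, A ≤ (j : ℕ) → (j : ℕ) < B → (j ∈ S ↔ (j : ℕ) < A + S.card) := by
  intro j hA hjB
  constructor
  · intro hj
    have hsub2 : (univ.filter fun y : Fin M => A ≤ (y : ℕ) ∧ (y : ℕ) < (j : ℕ) + 1) ⊆ S := by
      intro y hy
      simp only [Finset.mem_filter, Finset.mem_univ, true_and] at hy
      rcases Nat.lt_or_ge (y : ℕ) (j : ℕ) with h | h
      · exact hdc j hj y hy.1 h
      · have : y = j := Fin.ext (by omega)
        rw [this]; exact hj
    have := Finset.card_le_card hsub2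
    rw [cardIco (by omega : (j : ℕ) + 1 ≤ M)] at this
    omega
  · intro hj
    by_contra hjS
    have hsub2 : S ⊆ univ.filter fun y : Fin M => A ≤ (y : ℕ) ∧ (y : ℕ) < (j : ℕ) := by
      intro x hx
      simp only [Finset.mem_filter, Finset.mem_univ, true_and]
      refine ⟨(hsub x hx).1, ?_⟩
      rcases Nat.lt_or_ge (x : ℕ) (j : ℕ) with h | h
      · exact h
      · rcases Nat.eq_or_lt_of_le h with h' | h'
        · exact absurd (Fin.ext h'.symm : x = j) (fun he => hjS (he ▸ hx))
        · exact absurd (hdc x hx j hA h') hjS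
    have := Finset.card_le_card hsub2
    rw [cardIco (le_of_lt j.isLt)] at this
    omega

/-- In a max-crossing bichromatic perfect matching on a 4-block colored
bichromatic convex point set with blocks `R1, B1, R2, B2` (starting at `t`, sizes
`r1, b1, r2, b2`), there is `a ≤ min r1 b1` such that the first `a` points of `R1`
are matched into `B1`, the remaining `r1 − a` points of `R1` into `B2`, and the first
`b1 − a` points of `B1` into `R2`. -/
theorem stmt14 (n : ℕ)
    (p : Fin (2 * n) → ℝ × ℝ) (c : Fin (2 * n) → Bool)
    (hconv : ConvexCW (2 * n) p) (hcol : Bichrom n c)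
    (t : Fin (2 * n)) (r1 b1 r2 b2 : ℕ)
    (hblock : FourBlockAt n c t r1 b1 r2 b2)
    (f : Fin (2 * n) → Fin (2 * n)) (hM : IsBPM (2 * n) c f)
    (hmax : ∀ g : Fin (2 * n) → Fin (2 * n), IsBPM (2 * n) c g →
      crNum (2 * n) p g ≤ crNum (2 * n) p f) :
    ∃ a : ℕ, a ≤ r1 ∧ a ≤ b1 ∧
      (∀ j : Fin (2 * n), (j : ℕ) < a →
        ∃ j' : Fin (2 * n), r1 ≤ (j' : ℕ) ∧ (j' : ℕ) < r1 + b1 ∧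
          f (t + j) = t + j') ∧
      (∀ j : Fin (2 * n), a ≤ (j : ℕ) → (j : ℕ) < r1 →
        ∃ j' : Fin (2 * n), r1 + b1 + r2 ≤ (j' : ℕ) ∧
          f (t + j) = t + j') ∧
      (∀ j : Fin (2 * n), r1 ≤ (j : ℕ) → (j : ℕ) < r1 + (b1 - a) →
        ∃ j' : Fin (2 * n), r1 + b1 ≤ (j' : ℕ) ∧ (j' : ℕ) < r1 + b1 + r2 ∧
          f (t + j) = t + j') := by
  classical
  obtain ⟨hr1, hb1, hr2, hb2, hsum, hrr, hcol⟩ := hblock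
  obtain ⟨hinv, hfp, hcne⟩ := hM
  have hm : 0 < 2 * n := Fin.pos t
  haveI : NeZero (2 * n) := ⟨by omega⟩
  set Jf : Fin (2 * n) → Fin (2 * n) := fun k => f (t + k) - t with hJfdef
  have hJf : ∀ k : Fin (2 * n), t + Jf k = f (t + k) := by
    intro k; rw [hJfdef]; dsimp only; exact add_sub_cancel t (f (t + k))
  have hJfJf : ∀ k : Fin (2 * n), Jf (Jf k) = k := by
    intro k
    have h1 : t + Jf (Jf k) = f (t + Jf k) := hJf (Jf k)
    rw [hJf k, hinv (t + k)] at h1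
    exact add_left_cancel h1
  have Jfinj : Function.Injective Jf := by
    intro x y h
    have : t + Jf x = t + Jf y := by rw [h]
    rw [hJf x, hJf y] at this
    exact add_left_cancel (hinv.injective this)
  -- color facts
  have redk : ∀ k : Fin (2 * n), c (t + k) = true ↔
      ((k : ℕ) < r1 ∨ (r1 + b1 ≤ (k : ℕ) ∧ (k : ℕ) < r1 + b1 + r2)) := by
    intro k
    have hk := k.isLt
    rw [hcol k]
    split_ifs with h1 h2 h3 <;> simp <;> omega
  have bluek : ∀ k : Fin (2 * n), ¬((k : ℕ) < r1 ∨ (r1 + b1 ≤ (k : ℕ) ∧ (k : ℕ) < r1 + b1 + r2)) →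
      c (t + k) = false := by
    intro k h
    cases hc : c (t + k)
    · rfl
    · exact absurd ((redk k).mp hc) h
  have partner_blue : ∀ k : Fin (2 * n), c (t + k) = true →
      ((r1 ≤ (Jf k : ℕ) ∧ (Jf k : ℕ) < r1 + b1) ∨ (r1 + b1 + r2 ≤ (Jf k : ℕ))) := by
    intro k hk
    have h1 : c (t + Jf k) ≠ c (t + k) := by rw [hJf k]; exact hcne (t + k)
    rw [hk] at h1
    have h2 : c (t + Jf k) = false := by
      cases hc : c (t + Jf k)
      · rfl
      · exact absurd hc h1
    have h3 : ¬((Jf k : ℕ) < r1 ∨ (r1 + b1 ≤ (Jf k : ℕ) ∧ (Jf k : ℕ) < r1 + b1 + r2)) := by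
      intro hcon
      rw [(redk (Jf k)).mpr hcon] at h2
      exact Bool.noConfusion h2
    have hk2 := (Jf k).isLt
    omega
  have partner_red : ∀ k : Fin (2 * n), c (t + k) = false →
      ((Jf k : ℕ) < r1 ∨ (r1 + b1 ≤ (Jf k : ℕ) ∧ (Jf k : ℕ) < r1 + b1 + r2)) := by
    intro k hk
    have h1 : c (t + Jf k) ≠ c (t + k) := by rw [hJf k]; exact hcne (t + k)
    rw [hk] at h1
    have h2 : c (t + Jf k) = true := by
      cases hc : c (t + Jf k)
      · exact absurd hc h1
      · rfl
    exact (redk (Jf k)).mp h2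
  -- val arithmetic for rotations
  have vadd : ∀ k : Fin (2 * n),
      ((↑t + ↑k < 2 * n ∧ ((t + k : Fin (2 * n)) : ℕ) = ↑t + ↑k) ∨
       (2 * n ≤ ↑t + ↑k ∧ ((t + k : Fin (2 * n)) : ℕ) + 2 * n = ↑t + ↑k)) := by
    intro k
    have ht := t.isLt
    have hk := k.isLt
    rcases Nat.lt_or_ge (↑t + ↑k) (2 * n) with hh | hh
    · exact Or.inl ⟨hh, by rw [Fin.val_add, Nat.mod_eq_of_lt hh]⟩
    · refine Or.inr ⟨hh, ?_⟩
      rw [Fin.val_add, Nat.mod_eq_sub_mod hh, Nat.mod_eq_of_lt (by omega)]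
      omega
  have cyc : ∀ K1 K2 K3 K4 : Fin (2 * n), (K1 : ℕ) < K2 → (K2 : ℕ) < K3 → (K3 : ℕ) < K4 →
      CrN ↑(t + K1) ↑(t + K3) ↑(t + K2) ↑(t + K4) := by
    intro K1 K2 K3 K4 h12 h23 h34
    have v1 := vadd K1
    have v2 := vadd K2
    have v3 := vadd K3
    have v4 := vadd K4
    have hk4 := K4.isLt
    have ht := t.isLt
    unfold CrN
    omega
  have tne : ∀ K K' : Fin (2 * n), (K : ℕ) ≠ K' →
      ((t + K : Fin (2 * n)) : ℕ) ≠ ((t + K' : Fin (2 * n)) : ℕ) := by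
    intro K K' h he
    exact h (congrArg Fin.val (add_left_cancel (Fin.val_injective he)))
  have tneF : ∀ K K' : Fin (2 * n), (K : ℕ) ≠ K' → t + K ≠ t + K' := by
    intro K K' h he
    exact h (congrArg Fin.val (add_left_cancel he))
  -- monotonicity no. 1 : inside R1
  have mono1 : ∀ j1 j2 : Fin (2 * n), (j1 : ℕ) < j2 → (j2 : ℕ) < r1 →
      ¬(r1 + b1 + r2 ≤ (Jf j1 : ℕ) ∧ r1 ≤ (Jf j2 : ℕ) ∧ (Jf j2 : ℕ) < r1 + b1) := by
    rintro j1 j2 h12 h2r ⟨hB2, hB1a, hB1b⟩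
    have cu : c (t + j1) = true := (redk j1).mpr (Or.inl (h12.trans h2r))
    have cw : c (t + j2) = true := (redk j2).mpr (Or.inl h2r)
    have huw : t + j1 ≠ t + j2 := tneF j1 j2 (Nat.ne_of_lt h12)
    have hufw : t + j1 ≠ f (t + j2) := by
      rw [← hJf j2]
      apply tneF
      have := (Jf j2).isLt
      omega
    apply swap_rule hconv ⟨hinv, hfp, hcne⟩ hmax (cu.trans cw.symm) huw hufw
    rw [← hJf j1, ← hJf j2]
    exact CrN_swap_right.mp (cyc j1 j2 (Jf j2) (Jf j1) h12 (by omega) (by omega))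
  -- monotonicity no. 2 : inside B1
  have mono2 : ∀ k1 k2 : Fin (2 * n), r1 ≤ (k1 : ℕ) → (k1 : ℕ) < k2 → (k2 : ℕ) < r1 + b1 →
      ¬((Jf k1 : ℕ) < r1 ∧ r1 + b1 ≤ (Jf k2 : ℕ) ∧ (Jf k2 : ℕ) < r1 + b1 + r2) := by
    rintro k1 k2 hk1 h12 hk2 ⟨hR1, hR2a, hR2b⟩
    have cu : c (t + k1) = false := bluek k1 (by omega)
    have cw : c (t + k2) = false := bluek k2 (by omega)
    have huw : t + k1 ≠ t + k2 := tneF k1 k2 (Nat.ne_of_lt h12)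
    have hufw : t + k1 ≠ f (t + k2) := by
      rw [← hJf k2]
      apply tneF
      omega
    apply swap_rule hconv ⟨hinv, hfp, hcne⟩ hmax (cu.trans cw.symm) huw hufw
    rw [← hJf k1, ← hJf k2]
    have hbase := cyc (Jf k1) k1 k2 (Jf k2) (by omega) h12 (by omega)
    exact (CrN_comm
      (tne (Jf k1) k2 (by omega)) (tne k1 (Jf k2) (by omega))
      (tne (Jf k1) k1 (by omega)) (tne (Jf k1) (Jf k2) (by omega))
      (tne k2 k1 (by omega)) (tne k2 (Jf k2) (by omega))).mp hbase
  -- the set of R1-points matched into B1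
  set T : Finset (Fin (2 * n)) := univ.filter
    (fun j : Fin (2 * n) => (j : ℕ) < r1 ∧ r1 ≤ (Jf j : ℕ) ∧ (Jf j : ℕ) < r1 + b1) with hT
  have hmemT : ∀ j : Fin (2 * n),
      j ∈ T ↔ ((j : ℕ) < r1 ∧ r1 ≤ (Jf j : ℕ) ∧ (Jf j : ℕ) < r1 + b1) := by
    intro j; rw [hT]; simp
  have haR : T.card ≤ r1 := by
    have hsub : T ⊆ univ.filter (fun j : Fin (2 * n) => 0 ≤ (j : ℕ) ∧ (j : ℕ) < r1) := by
      intro x hx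
      rw [hmemT] at hx
      simp only [Finset.mem_filter, Finset.mem_univ, true_and]
      omega
    have := Finset.card_le_card hsub
    rw [cardIco (by omega : r1 ≤ 2 * n)] at this
    omega
  have hdcT : ∀ x ∈ T, ∀ y : Fin (2 * n), 0 ≤ (y : ℕ) → (y : ℕ) < (x : ℕ) → y ∈ T := by
    intro x hx y _ hyx
    rw [hmemT] at hx
    have hyr : (y : ℕ) < r1 := hyx.trans hx.1
    have cy : c (t + y) = true := (redk y).mpr (Or.inl hyr)
    rcases partner_blue y cy with hB1 | hB2
    · rw [hmemT]; exact ⟨hyr, hB1.1, hB1.2⟩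
    · exact absurd ⟨hB2, hx.2.1, hx.2.2⟩ (mono1 y x hyx hx.1)
  have hchar := downset_char T 0 r1 (by omega)
    (fun x hx => ⟨Nat.zero_le _, ((hmemT x).mp hx).1⟩) hdcT
  have haB : T.card ≤ b1 := by
    have hmap : ∀ j ∈ T, Jf j ∈ univ.filter
        (fun y : Fin (2 * n) => r1 ≤ (y : ℕ) ∧ (y : ℕ) < r1 + b1) := by
      intro j hj
      rw [hmemT] at hj
      simp only [Finset.mem_filter, Finset.mem_univ, true_and]
      exact ⟨hj.2.1, hj.2.2⟩
    have hcard := Finset.card_le_card_of_injOn Jf hmap (fun x _ y _ h => Jfinj h)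
    rw [cardIco (by omega : r1 + b1 ≤ 2 * n)] at hcard
    omega
  -- B1 side sets
  set U : Finset (Fin (2 * n)) := univ.filter
    (fun k : Fin (2 * n) => r1 ≤ (k : ℕ) ∧ (k : ℕ) < r1 + b1 ∧
      r1 + b1 ≤ (Jf k : ℕ) ∧ (Jf k : ℕ) < r1 + b1 + r2) with hU
  set V : Finset (Fin (2 * n)) := univ.filter
    (fun k : Fin (2 * n) => r1 ≤ (k : ℕ) ∧ (k : ℕ) < r1 + b1 ∧ (Jf k : ℕ) < r1) with hV
  have hmemU : ∀ k : Fin (2 * n), k ∈ U ↔ (r1 ≤ (k : ℕ) ∧ (k : ℕ) < r1 + b1 ∧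
      r1 + b1 ≤ (Jf k : ℕ) ∧ (Jf k : ℕ) < r1 + b1 + r2) := by
    intro k; rw [hU]; simp
  have hmemV : ∀ k : Fin (2 * n), k ∈ V ↔ (r1 ≤ (k : ℕ) ∧ (k : ℕ) < r1 + b1 ∧
      (Jf k : ℕ) < r1) := by
    intro k; rw [hV]; simp
  have hUV : ∀ k : Fin (2 * n), r1 ≤ (k : ℕ) → (k : ℕ) < r1 + b1 → (k ∈ U ∨ k ∈ V) := by
    intro k h1 h2
    have ck : c (t + k) = false := bluek k (by omega)
    rcases partner_red k ck with hR1 | hR2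
    · exact Or.inr ((hmemV k).mpr ⟨h1, h2, hR1⟩)
    · exact Or.inl ((hmemU k).mpr ⟨h1, h2, hR2.1, hR2.2⟩)
  have hVT : V.card = T.card := by
    apply Finset.card_bij (fun k _ => Jf k)
    · intro k hk
      rw [hmemV] at hk
      rw [hmemT]
      refine ⟨hk.2.2, ?_, ?_⟩ <;> rw [hJfJf k]
      · exact hk.1
      · exact hk.2.1
    · intro x hx y hy h; exact Jfinj h
    · intro j hj
      rw [hmemT] at hj
      refine ⟨Jf j, ?_, hJfJf j⟩
      rw [hmemV]
      refine ⟨hj.2.1, hj.2.2, ?_⟩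
      rw [hJfJf j]
      exact hj.1
  have hUcard : U.card + T.card = b1 := by
    have hdisj : Disjoint U V := by
      rw [Finset.disjoint_left]
      intro k hkU hkV
      rw [hmemU] at hkU
      rw [hmemV] at hkV
      omega
    have hunion : U ∪ V = univ.filter
        (fun k : Fin (2 * n) => r1 ≤ (k : ℕ) ∧ (k : ℕ) < r1 + b1) := by
      ext k
      simp only [Finset.mem_union, Finset.mem_filter, Finset.mem_univ, true_and]
      constructor
      · intro h
        rcases h with h | h
        · rw [hmemU] at h; exact ⟨h.1, h.2.1⟩
        · rw [hmemV] at h; exact ⟨h.1, h.2.1⟩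
      · intro h; exact hUV k h.1 h.2
    have := Finset.card_union_of_disjoint hdisj
    rw [hunion, cardIco (by omega : r1 + b1 ≤ 2 * n)] at this
    omega
  have hdcU : ∀ x ∈ U, ∀ y : Fin (2 * n), r1 ≤ (y : ℕ) → (y : ℕ) < (x : ℕ) → y ∈ U := by
    intro x hx y hy1 hyx
    rw [hmemU] at hx
    have hy2 : (y : ℕ) < r1 + b1 := hyx.trans hx.2.1
    rcases hUV y hy1 hy2 with h | h
    · exact h
    · rw [hmemV] at h
      exact absurd ⟨h.2.2, hx.2.2.1, hx.2.2.2⟩ (mono2 y x hy1 hyx hx.2.1)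
  have hcharU := downset_char U r1 (r1 + b1) (by omega)
    (fun x hx => ⟨((hmemU x).mp hx).1, ((hmemU x).mp hx).2.1⟩) hdcU
  -- final assembly
  refine ⟨T.card, haR, haB, ?_, ?_, ?_⟩
  · intro j hj
    have hjr : (j : ℕ) < r1 := hj.trans_le haR
    have hjT : j ∈ T := (hchar j (Nat.zero_le _) hjr).mpr (by omega)
    rw [hmemT] at hjT
    exact ⟨Jf j, hjT.2.1, hjT.2.2, (hJf j).symm⟩
  · intro j hja hjr
    have hjT : j ∉ T := by
      intro h
      have := (hchar j (Nat.zero_le _) hjr).mp h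
      omega
    have cj : c (t + j) = true := (redk j).mpr (Or.inl hjr)
    rcases partner_blue j cj with hB1 | hB2
    · exact absurd ((hmemT j).mpr ⟨hjr, hB1.1, hB1.2⟩) hjT
    · exact ⟨Jf j, hB2, (hJf j).symm⟩
  · intro j hj1 hj2
    have hj3 : (j : ℕ) < r1 + b1 := by omega
    have hjU : j ∈ U := by
      apply (hcharU j hj1 hj3).mpr
      omega
    rw [hmemU] at hjU
    exact ⟨Jf j, hjU.2.2.1, hjU.2.2.2, (hJf j).symm⟩
end
end
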